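/- arXiv:2601.22609 — 5 statements merged into one kernel-verified Lean document; each statement's English description precedes it below -/
import Mathlib

section
/- Let p, q, x be points of the plane ℝ² and let r_p, r_q be real numbers. If dist(x,p) − r_p ≤ dist(x,q) − r_q, then every point y on the closed segment [p,x] satisfies dist(y,p) − r_p ≤ dist(y,q) − r_q. In particular, for a finite set S of weighted points, the additively weighted Voronoi cell R(p) = {x ∈ ℝ² : dist(x,p) − r_p ≤ dist(x,q) − r_q for all q ∈ S} of any p ∈ S is star-shaped with respect to p: if x ∈ R(p) then the whole segment [p,x] is contained in R(p). -/
noncomputable section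

/-- The plane ℝ². -/
abbrev Plane : Type := EuclideanSpace ℝ (Fin 2)

/-- The additively weighted Voronoi cell of `p ∈ S`, where the point `x` has
additive weight `-(r x)`: the set of points whose weighted distance to `p` is
at most the weighted distance to every `q ∈ S`. -/
def VorCell (S : Finset Plane) (r : Plane → ℝ) (p : Plane) : Set Plane :=
  {x | ∀ q ∈ S, dist x p - r p ≤ dist x q - r q}

/-- If `dist x p - r_p ≤ dist x q - r_q`, then the same inequality holds at every point
of the closed segment `[p, x]`; consequently, every additively weighted Voronoi cell
`R(p)` is star-shaped with respect to `p`. -/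
theorem weighted_voronoi_cell_starshaped :
    (∀ (p q x : Plane) (rp rq : ℝ),
      dist x p - rp ≤ dist x q - rq →
      ∀ y ∈ segment ℝ p x, dist y p - rp ≤ dist y q - rq) ∧
    (∀ (S : Finset Plane) (r : Plane → ℝ), ∀ p ∈ S, ∀ x ∈ VorCell S r p,
      segment ℝ p x ⊆ VorCell S r p) := by
  have key : ∀ (p q x : Plane) (rp rq : ℝ),
      dist x p - rp ≤ dist x q - rq →
      ∀ y ∈ segment ℝ p x, dist y p - rp ≤ dist y q - rq := by
    intro p q x rp rq h y hy
    have h1 : dist p y + dist y x = dist p x := dist_add_dist_of_mem_segment hy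
    have h2 : dist x q ≤ dist x y + dist y q := dist_triangle x y q
    have e1 : dist y p = dist p y := dist_comm y p
    have e2 : dist y x = dist x y := dist_comm y x
    have e3 : dist x p = dist p x := dist_comm x p
    linarith
  refine ⟨key, ?_⟩
  intro S r p hp x hx y hy q hq
  exact key p q x (r p) (r q) (hx q hq) y hy
end
end

section
/- Let P be a finite set of points in the plane in convex position, let A, B ⊆ P be disjoint nonempty subsets, and let a₀ ∈ A and b₀ ∈ B. If A and B are not line-separable, then there exist points a ∈ A and b ∈ B such that the closed segments [a₀, a] and [b₀, b] intersect (cross each other). -/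
noncomputable section

/-- A finite point set is in convex position if every point of it is an extreme point
(vertex) of its convex hull, i.e. no point lies in the convex hull of the others. -/
def ConvexPos (P : Finset Plane) : Prop :=
  ∀ q ∈ P, q ∉ convexHull ℝ ((P : Set Plane) \ {q})

/-- Two point sets `A` and `B` are line-separable: there is a nonzero linear functional
`u` and a constant `c` with `u ≤ c` on `A` and `u ≥ c` on `B`. -/
def LineSep (A B : Set Plane) : Prop :=
  ∃ u : Plane →ₗ[ℝ] ℝ, u ≠ 0 ∧ ∃ c : ℝ, (∀ a ∈ A, u a ≤ c) ∧ (∀ b ∈ B, c ≤ u b)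

/-! Suppose no segment `[a₀, a]` (`a ∈ A`) meets a segment `[b₀, b]` (`b ∈ B`). As `A` and `B`
are not separable, their convex hulls share a point `x`, and by Carathéodory's theorem with a
prescribed apex, `x` lies in a triangle `a₀ a₁ a₂` with `a₁, a₂ ∈ A`. For points in convex
position, if `b₀` and `b` were weakly on opposite sides of the line `a₀ a`, then `[b₀, b]` would
meet this line inside `[a₀, a]`; so `B`, and with it `x`, lies strictly on one side of every line
`a₀ a`. Hence `B` lies inside the angle of the triangle at `a₀`, and, since no point of `B` is in
the triangle, strictly beyond the line `a₁ a₂`: so is `x`, which is absurd. -/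

open Set

section Convex

variable {𝕜 E : Type*} [Field 𝕜] [AddCommGroup E] [Module 𝕜 E]

theorem collinear_of_forall_apply_eq_zero [FiniteDimensional 𝕜 E] (hE : Module.finrank 𝕜 E ≤ 2)
    (f : E →ᵃ[𝕜] 𝕜) (hf : f.linear ≠ 0) {s : Set E} (hs : ∀ p ∈ s, f p = 0) :
    Collinear 𝕜 s := by
  rw [collinear_iff_finrank_le_one]
  have hker : vectorSpan 𝕜 s ≤ LinearMap.ker f.linear := by
    rw [vectorSpan_def, Submodule.span_le]
    rintro _ ⟨p, hp, q, hq, rfl⟩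
    change f.linear (p -ᵥ q) = 0
    rw [f.linearMap_vsub, hs p hp, hs q hq, vsub_self]
  have := Module.Dual.finrank_ker_add_one_of_ne_zero hf
  have := Submodule.finrank_mono hker
  omega

theorem exists_affineBasis_of_not_collinear [FiniteDimensional 𝕜 E]
    (hE : Module.finrank 𝕜 E = 2) {p q r : E} (h : ¬ Collinear 𝕜 {p, q, r}) :
    ∃ b : AffineBasis (Fin 3) 𝕜 E, ⇑b = ![p, q, r] := by
  have hind := affineIndependent_iff_not_collinear_set.mpr h
  exact ⟨⟨_, hind, hind.affineSpan_eq_top_iff_card_eq_finrank_add_one.mpr (by simp [hE])⟩, rfl⟩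

theorem AffineBasis.linear_coord_ne_zero {ι : Type*} [Nontrivial ι] (b : AffineBasis ι 𝕜 E)
    (i : ι) : (b.coord i).linear ≠ 0 := by
  obtain ⟨j, hj⟩ := exists_ne i
  intro h
  have := (b.coord i).linearMap_vsub (b i) (b j)
  rw [h, b.coord_apply_eq, b.coord_apply_ne hj.symm] at this
  simp at this

variable [LinearOrder 𝕜] [IsStrictOrderedRing 𝕜]

theorem AffineMap.exists_mem_segment_eq_zero (f : E →ᵃ[𝕜] 𝕜) {r s : E} (h : f r * f s ≤ 0) :
    ∃ m ∈ segment 𝕜 r s, f m = 0 := by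
  rw [← mem_image, image_segment, segment_eq_uIcc, mem_uIcc]
  rcases mul_nonpos_iff.mp h with h | h
  · exact Or.inr ⟨h.2, h.1⟩
  · exact Or.inl ⟨h.1, h.2⟩

theorem AffineMap.pos_of_mem_convexHull (f : E →ᵃ[𝕜] 𝕜) {s : Set E} (h : ∀ y ∈ s, 0 < f y)
    {x : E} (hx : x ∈ convexHull 𝕜 s) : 0 < f x :=
  convexHull_min h ((convex_Ioi 0).affine_preimage f) hx

theorem AffineBasis.exists_mem_convexHull_insert_image_compl {ι : Type*} [Fintype ι]
    (b : AffineBasis ι 𝕜 E) {x : E} (hx : x ∈ convexHull 𝕜 (range b)) (a : E) :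
    ∃ j, x ∈ convexHull 𝕜 (insert a (b '' {j}ᶜ)) := by
  classical
  rw [b.convexHull_eq_nonneg_coord] at hx
  set c := fun i => b.coord i x
  set α := fun i => b.coord i a
  obtain ⟨j, hj, hmin⟩ := (Finset.univ.filter (0 < α ·)).exists_min_image (fun i => c i / α i) <| by
    obtain ⟨i, -, hi⟩ := Finset.exists_lt_of_sum_lt (f := 0) (g := α) (s := Finset.univ)
      (by simp [α, b.sum_coord_apply_eq_one])
    exact ⟨i, by simpa using hi⟩
  simp only [Finset.mem_filter, Finset.mem_univ, true_and] at hj hmin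
  -- Shift the weight `r` from the `b i` onto `a = ∑ α i • b i`: `r` is the largest shift keeping
  -- every weight `c i - r * α i` nonnegative, so the weight of `b j` drops to zero.
  set r := c j / α j
  have hγ : ∀ i, 0 ≤ c i - r * α i := by
    intro i
    rcases lt_or_ge 0 (α i) with hi | hi
    · have := hmin i hi
      rw [le_div_iff₀ hi] at this
      linarith
    · nlinarith [hx i, div_nonneg (hx j) hj.le]
  have hγj : c j - r * α j = 0 := by simp [r, hj.ne']
  have hsum : r + ∑ i ∈ Finset.univ.erase j, (c i - r * α i) = 1 := by
    rw [Finset.sum_erase (f := fun i => c i - r * α i) _ hγj, Finset.sum_sub_distrib,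
      ← Finset.mul_sum]
    simp only [c, α, b.sum_coord_apply_eq_one]
    ring
  have hxeq : r • a + ∑ i ∈ Finset.univ.erase j, (c i - r * α i) • b i = x := by
    rw [Finset.sum_erase _ (by rw [hγj, zero_smul])]
    simp only [sub_smul, Finset.sum_sub_distrib, mul_smul, ← Finset.smul_sum, c, α,
      b.linear_combination_coord_eq_self]
    abel
  refine ⟨j, hxeq ▸ ?_⟩
  have := (convex_convexHull 𝕜 (insert a (b '' {j}ᶜ))).sum_mem
    (t := Finset.insertNone (Finset.univ.erase j)) (w := fun o => o.elim r fun i => c i - r * α i)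
    (z := fun o => o.elim a b) ?_ ?_ ?_
  · simpa [Finset.sum_insertNone] using this
  · simp only [Finset.forall_mem_insertNone]
    exact ⟨div_nonneg (hx j) hj.le, fun i _ => hγ i⟩
  · simpa [Finset.sum_insertNone] using hsum
  · simp only [Finset.forall_mem_insertNone]
    exact ⟨subset_convexHull 𝕜 _ (mem_insert _ _), fun i hi =>
      subset_convexHull 𝕜 _ (mem_insert_of_mem _ ⟨i, by simpa using hi, rfl⟩)⟩

theorem exists_card_le_finrank_mem_convexHull_insert [FiniteDimensional 𝕜 E] {s : Set E} {x : E}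
    (hx : x ∈ convexHull 𝕜 s) (a : E) :
    ∃ t : Finset E, ↑t ⊆ s ∧ t.card ≤ Module.finrank 𝕜 E ∧ x ∈ convexHull 𝕜 (insert a ↑t) := by
  classical
  rw [convexHull_eq_union] at hx
  simp only [mem_iUnion] at hx
  obtain ⟨t, hts, hind, hxt⟩ := hx
  have hcard : t.card ≤ Module.finrank 𝕜 E + 1 := by
    simpa using hind.card_le_finrank_succ.trans (Nat.add_le_add_right (Submodule.finrank_le _) 1)
  rcases hcard.lt_or_eq with hlt | heq
  · exact ⟨t, hts, by omega, convexHull_mono (subset_insert _ _) hxt⟩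
  let b : AffineBasis t 𝕜 E :=
    ⟨(↑), hind, hind.affineSpan_eq_top_iff_card_eq_finrank_add_one.mpr (by simpa using heq)⟩
  obtain ⟨j, hj⟩ := b.exists_mem_convexHull_insert_image_compl
    (by rwa [show range b = t from Subtype.range_coe]) a
  refine ⟨t.erase j, (Finset.coe_subset.mpr (t.erase_subset _)).trans hts, ?_, ?_⟩
  · rw [Finset.card_erase_of_mem j.2]
    omega
  · have hb : ⇑b = (↑) := rfl
    convert hj using 3
    rw [hb, Finset.coe_erase, Set.image_val_compl, Set.image_singleton]

theorem exists_mem_convexHull_insert_pair [FiniteDimensional 𝕜 E]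
    (hE : Module.finrank 𝕜 E ≤ 2) {s : Set E} {x a : E} (ha : a ∈ s) (hx : x ∈ convexHull 𝕜 s) :
    ∃ a₁ ∈ s, ∃ a₂ ∈ s, x ∈ convexHull 𝕜 {a, a₁, a₂} := by
  classical
  obtain ⟨t, hts, hcard, hxt⟩ := exists_card_le_finrank_mem_convexHull_insert hx a
  obtain ⟨a₁, ha₁, a₂, ha₂, ht⟩ : ∃ a₁ ∈ s, ∃ a₂ ∈ s, (t : Set E) ⊆ {a₁, a₂} := by
    obtain h | h | h : t.card = 0 ∨ t.card = 1 ∨ t.card = 2 := by omega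
    · exact ⟨a, ha, a, ha, by simp [Finset.card_eq_zero.mp h]⟩
    · obtain ⟨u, rfl⟩ := Finset.card_eq_one.mp h
      exact ⟨u, hts (by simp), u, hts (by simp), by simp⟩
    · obtain ⟨u, v, -, rfl⟩ := Finset.card_eq_two.mp h
      exact ⟨u, hts (by simp), v, hts (by simp), by simp⟩
  exact ⟨a₁, ha₁, a₂, ha₂, convexHull_mono (insert_subset_insert ht) hxt⟩

end Convex

namespace ConvexPos

variable {P : Finset Plane}

theorem mono {Q : Finset Plane} (hP : ConvexPos P) (hQ : Q ⊆ P) : ConvexPos Q :=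
  fun q hq h =>
    hP q (hQ hq) (convexHull_mono (sdiff_subset_sdiff_left (Finset.coe_subset.mpr hQ)) h)

theorem notMem_convexHull (hP : ConvexPos P) {p : Plane} (hp : p ∈ P) {S : Set Plane}
    (hS : S ⊆ P) (hpS : p ∉ S) : p ∉ convexHull ℝ S :=
  fun h => hP p hp (convexHull_mono (show S ⊆ ↑P \ {p} from
    fun _ hy => ⟨hS hy, fun hyp => hpS (hyp ▸ hy)⟩) h)

theorem mem_segment_of_collinear (hP : ConvexPos P) {p q r s m : Plane} (hp : p ∈ P) (hq : q ∈ P)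
    (hr : r ∈ P) (hs : s ∈ P) (hpq : p ≠ q) (hpr : p ≠ r) (hps : p ≠ s) (hqr : q ≠ r)
    (hqs : q ≠ s) (hm : m ∈ segment ℝ r s) (hcol : Collinear ℝ {p, q, m}) :
    m ∈ segment ℝ p q := by
  have hm' (z : Plane) : m ∈ convexHull ℝ {z, r, s} :=
    convexHull_mono (subset_insert z _) (by rwa [convexHull_pair])
  have hnotBtw {z w : Plane} (hz : z ∈ P) (hw : w ∈ P) (hzr : z ≠ r) (hzs : z ≠ s) (hwz : w ≠ z)
      (hwr : w ≠ r) (hws : w ≠ s) (h : Wbtw ℝ z w m) : False :=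
    hP.notMem_convexHull hw (S := {z, r, s}) (by simp [insert_subset_iff, hz, hr, hs])
      (by simp [hwz, hwr, hws]) ((convex_convexHull ℝ _).segment_subset
        (subset_convexHull ℝ _ (mem_insert z _)) (hm' z) (mem_segment_iff_wbtw.2 h))
  rcases hcol.wbtw_or_wbtw_or_wbtw with h | h | h
  · exact (hnotBtw hp hq hpr hps hpq.symm hqr hqs h).elim
  · rw [segment_symm]
    exact mem_segment_iff_wbtw.2 h
  · exact (hnotBtw hq hp hqr hqs hpq hpr hps h.symm).elim

theorem not_collinear (hP : ConvexPos P) {p q r : Plane} (hp : p ∈ P) (hq : q ∈ P) (hr : r ∈ P)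
    (hpq : p ≠ q) (hpr : p ≠ r) (hqr : q ≠ r) : ¬ Collinear ℝ {p, q, r} := fun hcol =>
  hP.notMem_convexHull hr (S := {p, q}) (by simp [insert_subset_iff, hp, hq])
    (by simp [hpr.symm, hqr.symm]) (by
      rw [convexHull_pair]
      exact hP.mem_segment_of_collinear hp hq hr hr hpq hpr hpr hqr hqr (left_mem_segment ℝ r r)
        hcol)

theorem segment_inter_nonempty_of_mul_nonpos (hP : ConvexPos P) {p q r s : Plane} (hp : p ∈ P)
    (hq : q ∈ P) (hr : r ∈ P) (hs : s ∈ P) (hpq : p ≠ q) (hpr : p ≠ r) (hps : p ≠ s)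
    (hqr : q ≠ r) (hqs : q ≠ s) {f : Plane →ᵃ[ℝ] ℝ} (hf : f.linear ≠ 0) (hfp : f p = 0)
    (hfq : f q = 0) (hrs : f r * f s ≤ 0) : (segment ℝ p q ∩ segment ℝ r s).Nonempty := by
  obtain ⟨m, hm, hfm⟩ := f.exists_mem_segment_eq_zero hrs
  have hcol : Collinear ℝ {p, q, m} :=
    collinear_of_forall_apply_eq_zero finrank_euclideanSpace_fin.le f hf (by simp [hfp, hfq, hfm])
  exact ⟨m, hP.mem_segment_of_collinear hp hq hr hs hpq hpr hps hqr hqs hm hcol, hm⟩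

theorem exists_coord_neg (hP : ConvexPos P) {ι : Type*} (b : AffineBasis ι ℝ Plane)
    (hb : range b ⊆ P) {y : Plane} (hy : y ∈ P) (hyb : y ∉ range b) : ∃ i, b.coord i y < 0 := by
  by_contra! h
  exact hP.notMem_convexHull hy hb hyb (by rw [b.convexHull_eq_nonneg_coord]; exact h)

end ConvexPos

theorem lineSep_of_disjoint_convexHull {A B : Finset Plane} (hA : A.Nonempty) (hB : B.Nonempty)
    (h : Disjoint (convexHull ℝ (A : Set Plane)) (convexHull ℝ (B : Set Plane))) :
    LineSep A B := by
  obtain ⟨f, u, v, hfu, huv, hfv⟩ := geometric_hahn_banach_compact_closed (convex_convexHull ℝ _)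
    (A.finite_toSet.isCompact_convexHull (𝕜 := ℝ)) (convex_convexHull ℝ _)
    (B.finite_toSet.isCompact_convexHull (𝕜 := ℝ)).isClosed h
  refine ⟨f, fun h0 => ?_, u, fun a ha => (hfu a (subset_convexHull ℝ _ ha)).le,
    fun b hb => (huv.trans (hfv b (subset_convexHull ℝ _ hb))).le⟩
  obtain ⟨a, ha⟩ := hA
  obtain ⟨b, hb⟩ := hB
  have hfa := hfu a (subset_convexHull ℝ _ ha)
  have hfb := hfv b (subset_convexHull ℝ _ hb)
  rw [show f a = 0 from LinearMap.congr_fun h0 a] at hfa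
  rw [show f b = 0 from LinearMap.congr_fun h0 b] at hfb
  linarith

section NoCrossing

variable {A B : Finset Plane} {a₀ b₀ : Plane}

theorem pos_of_segments_disjoint (hP : ConvexPos (A ∪ B)) (hAB : Disjoint A B) (ha₀ : a₀ ∈ A)
    (hb₀ : b₀ ∈ B) (hcross : ∀ a ∈ A, ∀ b ∈ B, segment ℝ a₀ a ∩ segment ℝ b₀ b = ∅) {a : Plane}
    (ha : a ∈ A) (hne : a₀ ≠ a) {f : Plane →ᵃ[ℝ] ℝ} (hf : f.linear ≠ 0) (hfa₀ : f a₀ = 0)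
    (hfa : f a = 0) {x : Plane} (hxB : x ∈ convexHull ℝ (B : Set Plane)) (hfx : 0 ≤ f x) :
    ∀ b ∈ B, 0 < f b := by
  have hside : ∀ b ∈ B, 0 < (f b₀ • f) b := fun b hb => by
    by_contra! h
    refine Set.not_nonempty_iff_eq_empty.mpr (hcross a ha b hb) ?_
    have hAB' := Finset.disjoint_iff_ne.mp hAB
    exact hP.segment_inter_nonempty_of_mul_nonpos (Finset.mem_union_left _ ha₀)
      (Finset.mem_union_left _ ha) (Finset.mem_union_right _ hb₀) (Finset.mem_union_right _ hb)
      hne (hAB' _ ha₀ _ hb₀) (hAB' _ ha₀ _ hb) (hAB' _ ha _ hb₀) (hAB' _ ha _ hb) hf hfa₀ hfa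
      (by simpa using h)
  have hb₀x : 0 < f b₀ * f x := by simpa using (f b₀ • f).pos_of_mem_convexHull hside hxB
  have hfb₀ : 0 < f b₀ := pos_of_mul_pos_left hb₀x hfx
  exact fun b hb => pos_of_mul_pos_right (by simpa using hside b hb) hfb₀.le

theorem notMem_convexHull_of_mem_segment (hP : ConvexPos (A ∪ B)) (hAB : Disjoint A B)
    (ha₀ : a₀ ∈ A) (hb₀ : b₀ ∈ B)
    (hcross : ∀ a ∈ A, ∀ b ∈ B, segment ℝ a₀ a ∩ segment ℝ b₀ b = ∅) {a x : Plane} (ha : a ∈ A)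
    (hx : x ∈ segment ℝ a₀ a) : x ∉ convexHull ℝ (B : Set Plane) := by
  intro hxB
  rcases eq_or_ne a₀ a with rfl | hne
  · rw [segment_same, mem_singleton_iff] at hx
    subst hx
    exact hP.notMem_convexHull (Finset.mem_union_left _ ha₀) (by simp)
      (Finset.disjoint_left.mp hAB ha₀) hxB
  have hAB' := Finset.disjoint_iff_ne.mp hAB
  obtain ⟨b, hb⟩ := exists_affineBasis_of_not_collinear finrank_euclideanSpace_fin
    (hP.not_collinear (Finset.mem_union_left _ ha₀) (Finset.mem_union_left _ ha)
      (Finset.mem_union_right _ hb₀) hne (hAB' _ ha₀ _ hb₀) (hAB' _ ha _ hb₀))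
  have hfa₀ : b.coord 2 a₀ = 0 := by simpa [hb] using b.coord_apply_ne (i := 2) (j := 0) (by decide)
  have hfa : b.coord 2 a = 0 := by simpa [hb] using b.coord_apply_ne (i := 2) (j := 1) (by decide)
  have hfx : b.coord 2 x = 0 := by
    have hmem := mem_image_of_mem (b.coord 2) hx
    rwa [image_segment, hfa₀, hfa, segment_same] at hmem
  have hpos := pos_of_segments_disjoint hP hAB ha₀ hb₀ hcross ha hne (b.linear_coord_ne_zero 2)
    hfa₀ hfa hxB hfx.ge
  exact ((b.coord 2).pos_of_mem_convexHull hpos hxB).ne' hfx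

theorem notMem_convexHull_of_mem_convexHull_triple (hP : ConvexPos (A ∪ B)) (hAB : Disjoint A B)
    (ha₀ : a₀ ∈ A) (hb₀ : b₀ ∈ B)
    (hcross : ∀ a ∈ A, ∀ b ∈ B, segment ℝ a₀ a ∩ segment ℝ b₀ b = ∅) {a₁ a₂ x : Plane}
    (ha₁ : a₁ ∈ A) (ha₂ : a₂ ∈ A) (hx : x ∈ convexHull ℝ {a₀, a₁, a₂}) :
    x ∉ convexHull ℝ (B : Set Plane) := by
  have hsegment {a : Plane} (ha : a ∈ A) (hxa : x ∈ segment ℝ a₀ a) :=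
    notMem_convexHull_of_mem_segment hP hAB ha₀ hb₀ hcross ha hxa
  rcases eq_or_ne a₀ a₁ with rfl | h01
  · exact hsegment ha₂ (by simpa [convexHull_pair] using hx)
  rcases eq_or_ne a₀ a₂ with rfl | h02
  · exact hsegment ha₁ (by simpa [convexHull_pair, segment_symm] using hx)
  rcases eq_or_ne a₁ a₂ with rfl | h12
  · exact hsegment ha₁ (by simpa [convexHull_pair] using hx)
  intro hxB
  obtain ⟨b, hb⟩ := exists_affineBasis_of_not_collinear finrank_euclideanSpace_fin
    (hP.not_collinear (Finset.mem_union_left _ ha₀) (Finset.mem_union_left _ ha₁)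
      (Finset.mem_union_left _ ha₂) h01 h02 h12)
  have hrange : range b = {a₀, a₁, a₂} := by
    rw [hb, Matrix.range_cons, Matrix.range_cons, Matrix.range_cons, Matrix.range_empty,
      union_empty, singleton_union, singleton_union]
  have hcoord (i j : Fin 3) (hij : i ≠ j) : b.coord i (![a₀, a₁, a₂] j) = 0 :=
    hb ▸ b.coord_apply_ne hij
  rw [← hrange, b.convexHull_eq_nonneg_coord] at hx
  have h₂ := pos_of_segments_disjoint hP hAB ha₀ hb₀ hcross ha₁ h01 (b.linear_coord_ne_zero 2)
    (hcoord 2 0 (by decide)) (hcoord 2 1 (by decide)) hxB (hx 2)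
  have h₁ := pos_of_segments_disjoint hP hAB ha₀ hb₀ hcross ha₂ h02 (b.linear_coord_ne_zero 1)
    (hcoord 1 0 (by decide)) (hcoord 1 2 (by decide)) hxB (hx 1)
  have h₀ : ∀ y ∈ B, 0 < (-b.coord 0) y := by
    intro y hy
    obtain ⟨i, hi⟩ := hP.exists_coord_neg b
      (by simp [hrange, insert_subset_iff, ha₀, ha₁, ha₂]) (Finset.mem_union_right _ hy)
      (by rw [hrange]; rintro (rfl | rfl | rfl) <;> exact Finset.disjoint_left.mp hAB ‹_› hy)
    fin_cases i
    · simpa using hi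
    · exact (lt_asymm (h₁ y hy) hi).elim
    · exact (lt_asymm (h₂ y hy) hi).elim
  have hx₀ := (-b.coord 0).pos_of_mem_convexHull h₀ hxB
  rw [AffineMap.coe_neg, Pi.neg_apply, neg_pos] at hx₀
  exact hx₀.not_ge (hx 0)

end NoCrossing

/-- If `A, B` are disjoint nonempty subsets of a finite set `P` of points in convex
position, `a₀ ∈ A`, `b₀ ∈ B`, and `A` and `B` are not line-separable, then there are
`a ∈ A` and `b ∈ B` such that the closed segments `[a₀, a]` and `[b₀, b]` intersect. -/
theorem not_line_separable_segments_cross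
    (P : Finset Plane) (hP : ConvexPos P)
    (A B : Finset Plane) (hA : A ⊆ P) (hB : B ⊆ P) (hAB : Disjoint A B)
    (a₀ : Plane) (ha₀ : a₀ ∈ A) (b₀ : Plane) (hb₀ : b₀ ∈ B)
    (hsep : ¬ LineSep (A : Set Plane) (B : Set Plane)) :
    ∃ a ∈ A, ∃ b ∈ B, (segment ℝ a₀ a ∩ segment ℝ b₀ b).Nonempty := by
  by_contra! hcross
  obtain ⟨x, hxA, hxB⟩ := not_disjoint_iff.mp fun h =>
    hsep (lineSep_of_disjoint_convexHull ⟨a₀, ha₀⟩ ⟨b₀, hb₀⟩ h)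
  obtain ⟨a₁, ha₁, a₂, ha₂, hx⟩ :=
    exists_mem_convexHull_insert_pair finrank_euclideanSpace_fin.le ha₀ hxA
  exact notMem_convexHull_of_mem_convexHull_triple (hP.mono (Finset.union_subset hA hB)) hAB ha₀
    hb₀ hcross ha₁ ha₂ hx hxB
end
end

section
/- (Line-separable property, Lemma 3.1.) Let P be a finite set of points in the plane in convex position, with radii r_p ≥ 0, and let S be a dominating set of the disk graph G(P) of minimum cardinality. Then there exist a partition 𝒜 = ⟨α_1,…,α_m⟩ of P into nonempty sublists listed counterclockwise and an assignment φ : 𝒜 → S (i.e., for every α ∈ 𝒜 and every q ∈ α, the disks D_q and D_{φ(α)} intersect) such that: φ is line-separable, i.e., for all distinct p, q ∈ S the point sets 𝒜_p = ∪{α : φ(α)=p} and 𝒜_q = ∪{α : φ(α)=q} are line-separable; (1) for every p ∈ S, p belongs to a sublist α with φ(α) = p; and (2) any two cyclically adjacent sublists of 𝒜 are assigned to different points of S. -/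
/-!
Send every point outside `S` to a center `s ∈ S` minimising the additively weighted distance
`dist q s - r s`, and every point of `S` to itself; domination makes this an assignment.
Suppose two groups were not separated by a line. Since the points are in convex position, the
groups would then interleave along the polygon, and one finds a convex quadrilateral `s, x, y, s'`
with `x` sent to `s'` and `y` sent to `s`. The diagonals of a convex quadrilateral are longer than
two opposite sides together, so `dist x s + dist y s' < dist x s' + dist y s`, contradicting the
choice of the centers of `x` and `y`. The sublists are the maximal runs of points with the same
center along the cyclic order.
-/

noncomputable section

/-- The planar cross product (signed area determinant). -/
def det2 (u v : Plane) : ℝ := u 0 * v 1 - u 1 * v 0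

/-- `p : ZMod n → Plane` lists points in convex position in counterclockwise order:
every point other than `p i` and `p (i+1)` lies strictly to the left of the directed
line from `p i` to `p (i+1)`. -/
def CCWConvex {n : ℕ} (p : ZMod n → Plane) : Prop :=
  ∀ i j : ZMod n, j ≠ i → j ≠ i + 1 →
    0 < det2 (p (i + 1) - p i) (p j - p i)

/-- `S` is a dominating set of the disk graph on the points `p 0, …, p (n-1)` with
radii `r`: `S` is a set of these points, and the disk of every point intersects the
disk of some point of `S`. -/
def IsDominating {n : ℕ} (p : ZMod n → Plane) (r : Plane → ℝ) (S : Set Plane) : Prop :=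
  S ⊆ Set.range p ∧ ∀ q ∈ Set.range p, ∃ s ∈ S, dist q s ≤ r q + r s

/-- A partition of the cyclic point sequence `p 0, …, p (n-1)` into `m` nonempty
contiguous sublists `α_0, …, α_{m-1}` listed counterclockwise: the sublist `α_j`
consists of the `len j` consecutive points starting at cyclic position
`start + (sum of the lengths of the sublists before j)`. -/
structure SublistPartition (n m : ℕ) [NeZero m] where
  start : ZMod n
  len : ZMod m → ℕ
  len_pos : ∀ j, 0 < len j
  len_sum : ∑ j, len j = n

variable {n m : ℕ} [NeZero m]

/-- The cyclic position offset at which the sublist `α_j` starts. -/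
def SublistPartition.offset (A : SublistPartition n m) (j : ZMod m) : ℕ :=
  ∑ j' ∈ Finset.univ.filter (fun j' : ZMod m => j'.val < j.val), A.len j'

/-- The set of points of the sublist `α_j`. -/
def SublistPartition.block (A : SublistPartition n m) (p : ZMod n → Plane)
    (j : ZMod m) : Set Plane :=
  (fun t : ℕ => p (A.start + (A.offset j : ZMod n) + (t : ZMod n))) '' Set.Iio (A.len j)

/-- The group `𝒜_s` of a center `s`: the points of all sublists assigned to `s`. -/
def group (A : SublistPartition n m) (p : ZMod n → Plane) (φ : ZMod m → Plane)
    (s : Plane) : Set Plane :=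
  {x | ∃ j, φ j = s ∧ x ∈ A.block p j}

/-- `φ` is an assignment of the sublists of the partition `A` to points of `S`:
each sublist `α_j` is assigned a point `φ j ∈ S` whose disk intersects the disk
of every point of `α_j`. -/
def IsAssignment (A : SublistPartition n m) (p : ZMod n → Plane) (r : Plane → ℝ)
    (S : Set Plane) (φ : ZMod m → Plane) : Prop :=
  (∀ j, φ j ∈ S) ∧ ∀ j, ∀ x ∈ A.block p j, dist x (φ j) ≤ r x + r (φ j)

/-- A Lemma-3.1 assignment: an assignment that is line-separable, such that
(1) every `s ∈ S` lies in one of its own sublists (its main sublist), and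
(2) cyclically adjacent sublists are assigned to different points of `S`. -/
def IsLemma31Assignment (A : SublistPartition n m) (p : ZMod n → Plane) (r : Plane → ℝ)
    (S : Set Plane) (φ : ZMod m → Plane) : Prop :=
  IsAssignment A p r S φ ∧
  (∀ s ∈ S, ∀ s' ∈ S, s ≠ s' → LineSep (group A p φ s) (group A p φ s')) ∧
  (∀ s ∈ S, ∃ j, φ j = s ∧ s ∈ A.block p j) ∧
  (∀ j : ZMod m, j + 1 ≠ j → φ (j + 1) ≠ φ j)


lemma det2_self (v : Plane) : det2 v v = 0 := by
  simp only [det2]; ring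

lemma det2_zero_right (v : Plane) : det2 v 0 = 0 := by
  simp [det2]

lemma det2_comm (u v : Plane) : det2 u v = -det2 v u := by
  simp only [det2]; ring

lemma det2_smul_left (t : ℝ) (u v : Plane) : det2 (t • u) v = t * det2 u v := by
  simp only [det2, PiLp.smul_apply, smul_eq_mul]; ring

lemma det2_sub_sub (a b c : Plane) : det2 (c - b) (a - b) = det2 (b - a) (c - a) := by
  simp only [det2, PiLp.sub_apply]; ring

lemma det2_mul_det2 (a b c e : Plane) :
    det2 a c * det2 e b = det2 a b * det2 e c + det2 e a * det2 b c := by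
  simp only [det2]; ring

lemma det2_pos_trans {e a b c : Plane} (hea : 0 < det2 e a) (heb : 0 < det2 e b)
    (hec : 0 < det2 e c) (hab : 0 < det2 a b) (hbc : 0 < det2 b c) : 0 < det2 a c :=
  pos_of_mul_pos_left (by rw [det2_mul_det2]; positivity) heb.le

lemma exists_det2_ne_zero {v : Plane} (hv : v ≠ 0) : ∃ w, det2 v w ≠ 0 := by
  by_contra! h
  have h₀ := h (EuclideanSpace.single 0 1)
  have h₁ := h (EuclideanSpace.single 1 1)
  simp [det2] at h₀ h₁
  exact hv (by ext i; fin_cases i <;> simp [h₀, h₁])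

lemma det2_eq_zero_of_mem_segment {a b x : Plane} (h : x ∈ segment ℝ a b) :
    det2 (b - a) (x - a) = 0 := by
  obtain ⟨s, t, -, -, hst, rfl⟩ := h
  obtain rfl : s = 1 - t := by linarith
  have : (1 - t) • a + t • b - a = t • (b - a) := by module
  rw [this, det2_comm, det2_smul_left, det2_self, mul_zero, neg_zero]

lemma dist_lt_dist_add_dist_of_det2_ne_zero {x y z : Plane} (h : det2 (y - x) (z - x) ≠ 0) :
    dist x z < dist x y + dist y z := by
  refine (dist_triangle x y z).lt_of_ne fun heq => h ?_
  have hy : y ∈ segment ℝ x z := (dist_add_dist_eq_iff.1 heq.symm).mem_segment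
  rw [det2_comm, det2_eq_zero_of_mem_segment hy, neg_zero]

lemma det2_smul_eq_add (x y z : Plane) : det2 x z • y = det2 y z • x + det2 x y • z := by
  ext i
  fin_cases i <;> simp [det2] <;> ring

/-- Both triangle inequalities through the crossing point of the diagonals are strict. -/
lemma dist_add_dist_lt_of_det2_pos {W X Y Z : Plane}
    (h₁ : 0 < det2 (X - W) (Y - W)) (h₂ : 0 < det2 (X - W) (Z - W))
    (h₃ : 0 < det2 (Y - W) (Z - W)) (h₄ : 0 < det2 (Y - X) (Z - X)) :
    dist W X + dist Y Z < dist W Y + dist X Z := by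
  set a := det2 (X - W) (Y - W)
  set b := det2 (Y - W) (Z - W)
  have hD : 0 < a + b := by positivity
  have hD₄ : a + b - det2 (X - W) (Z - W) = det2 (Y - X) (Z - X) := by
    simp only [a, b, det2, PiLp.sub_apply]; ring
  set μ := det2 (X - W) (Z - W) / (a + b)
  have hμ₀ : 0 < μ := by positivity
  have hμ₁ : μ < 1 := (div_lt_one hD).2 (by linarith)
  set O := W + μ • (Y - W)
  have hWY : O ∈ segment ℝ W Y :=
    ⟨1 - μ, μ, by linarith, hμ₀.le, by ring, by simp only [O]; module⟩
  have hXZ : O ∈ segment ℝ X Z := by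
    have hscaled : (a + b) • (O - X) = a • (Z - X) := by
      have key : det2 (X - W) (Z - W) • (Y - W) = b • (X - W) + a • (Z - W) :=
        det2_smul_eq_add _ _ _
      calc (a + b) • (O - X) = (a + b) • (W - X) + ((a + b) * μ) • (Y - W) := by
            simp only [O]; module
        _ = a • (Z - X) := by rw [mul_div_cancel₀ _ hD.ne', key]; module
    have hO : O = X + (a / (a + b)) • (Z - X) := by
      rw [div_eq_inv_mul, ← smul_smul, ← hscaled, smul_smul, inv_mul_cancel₀ hD.ne', one_smul,
        add_sub_cancel]
    exact ⟨1 - a / (a + b), a / (a + b), by rw [sub_nonneg, div_le_one hD]; linarith,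
      by positivity, by ring, by rw [hO]; module⟩
  have hWOX : dist W X < dist W O + dist O X := by
    refine dist_lt_dist_add_dist_of_det2_ne_zero ?_
    rw [show O - W = μ • (Y - W) from add_sub_cancel_left _ _, det2_smul_left, det2_comm]
    nlinarith
  have hYOZ : dist Y Z < dist Y O + dist O Z := by
    refine dist_lt_dist_add_dist_of_det2_ne_zero ?_
    have hOY : O - Y = (μ - 1) • (Y - W) := by simp only [O]; module
    have hZY : det2 (Y - W) (Z - Y) = b := by simp only [b, det2, PiLp.sub_apply]; ring
    rw [hOY, det2_smul_left, hZY]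
    nlinarith
  linarith [dist_add_dist_of_mem_segment hWY, dist_add_dist_of_mem_segment hXZ,
    dist_comm O X, dist_comm Y O]

lemma lineSep_of_det2 {A B : Set Plane} {v x₀ : Plane} (hv : v ≠ 0)
    (hA : ∀ x ∈ A, 0 ≤ det2 v (x - x₀)) (hB : ∀ x ∈ B, det2 v (x - x₀) ≤ 0) : LineSep A B := by
  have hsub : ∀ x, det2 v (x - x₀) = det2 v x - det2 v x₀ := fun x => by
    simp only [det2, PiLp.sub_apply]; ring
  let u : Plane →ₗ[ℝ] ℝ :=
    { toFun := fun x => -det2 v x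
      map_add' := fun x y => by simp only [det2, PiLp.add_apply]; ring
      map_smul' := fun t x => by
        simp only [det2, PiLp.smul_apply, smul_eq_mul, RingHom.id_apply]; ring }
  obtain ⟨w, hw⟩ := exists_det2_ne_zero hv
  refine ⟨u, fun hu => hw (neg_eq_zero.1 (LinearMap.congr_fun hu w)), -det2 v x₀,
    fun x hx => ?_, fun x hx => ?_⟩
  · have := hA x hx; rw [hsub] at this; simp only [u, LinearMap.coe_mk, AddHom.coe_mk]; linarith
  · have := hB x hx; rw [hsub] at this; simp only [u, LinearMap.coe_mk, AddHom.coe_mk]; linarith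

lemma ZMod.val_sub_of_val_sub_le [NeZero n] {i x y : ZMod n}
    (h : (x - i).val ≤ (y - i).val) :
    (y - x).val = (y - i).val - (x - i).val := by
  rw [← ZMod.val_sub h, sub_sub_sub_cancel_right]

lemma ZMod.val_sub_of_val_sub_lt [NeZero n] {i x y : ZMod n}
    (h : (y - i).val < (x - i).val) :
    (y - x).val = n + (y - i).val - (x - i).val := by
  have hne : (x - i) - (y - i) ≠ 0 := fun h0 => by
    have := ZMod.val_sub h.le
    rw [h0, ZMod.val_zero] at this
    omega
  rw [show y - x = -((x - i) - (y - i)) by ring, ZMod.neg_val, if_neg hne, ZMod.val_sub h.le]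
  have := ZMod.val_lt (x - i)
  omega

lemma ZMod.eq_of_val_sub_eq [NeZero n] {i x y : ZMod n} (h : (x - i).val = (y - i).val) :
    x = y :=
  sub_left_inj.1 (ZMod.val_injective n h)

section ConvexPosition

variable {p : ZMod n → Plane}

theorem CCWConvex.det2_pos_of_lt [NeZero n] (hp : CCWConvex p) (i : ZMod n) {o₁ o₂ : ℕ}
    (h₁ : 0 < o₁) (h₁₂ : o₁ < o₂) (h₂ : o₂ < n) :
    0 < det2 (p (i + o₁) - p i) (p (i + o₂) - p i) := by
  have cast_ne : ∀ {o o' : ℕ}, o < n → o' < n → o ≠ o' → (o : ZMod n) ≠ o' :=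
    fun ho ho' h e => h <| by
      simpa [ZMod.val_cast_of_lt ho, ZMod.val_cast_of_lt ho'] using congrArg ZMod.val e
  have edge : ∀ o, 1 < o → o < n → 0 < det2 (p (i + 1) - p i) (p (i + o) - p i) := by
    intro o h1 h2
    refine hp i _ (fun e => cast_ne (o' := 0) h2 (by omega) (by omega) ?_)
      (fun e => cast_ne (o' := 1) h2 (by omega) (by omega) ?_)
    · simpa using e
    · simpa using e
  have step : ∀ o, 0 < o → o + 1 < n →
      0 < det2 (p (i + o) - p i) (p (i + (o + 1 : ℕ)) - p i) := by
    intro o h1 h2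
    have := hp (i + o) i (fun e => cast_ne (o' := 0) (o := o) (by omega) (by omega) (by omega)
      (by simpa using e.symm)) (fun e => cast_ne (o' := 0) (o := o + 1) h2 (by omega) (by omega)
      (by simpa [add_assoc] using e.symm))
    rw [Nat.cast_succ, ← add_assoc]
    rwa [det2_sub_sub] at this
  -- all later vertices lie left of the first edge, so `det2_pos_trans` chains the `step`s
  rcases Nat.lt_or_ge 1 o₁ with h₁ | h₁
  · induction o₂, h₁₂ using Nat.le_induction with
    | base => exact step o₁ (by omega) h₂
    | succ k hk ih =>
      exact det2_pos_trans (edge o₁ h₁ (by omega)) (edge k (by omega) (by omega))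
        (edge (k + 1) (by omega) h₂) (ih (by omega)) (step k (by omega) h₂)
  · obtain rfl : o₁ = 1 := by omega
    simpa using edge o₂ (by omega) h₂

theorem CCWConvex.det2_pos [NeZero n] (hp : CCWConvex p) {i j k : ZMod n}
    (hj : 0 < (j - i).val) (hjk : (j - i).val < (k - i).val) :
    0 < det2 (p j - p i) (p k - p i) := by
  simpa only [ZMod.natCast_zmod_val, add_sub_cancel] using
    hp.det2_pos_of_lt i hj hjk (ZMod.val_lt _)

theorem CCWConvex.det2_edge_nonneg (hp : CCWConvex p) (i k : ZMod n) :
    0 ≤ det2 (p (i + 1) - p i) (p k - p i) := by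
  by_cases h₀ : k = i
  · rw [h₀, sub_self, det2_zero_right]
  by_cases h₁ : k = i + 1
  · rw [h₁, det2_self]
  exact (hp i k h₀ h₁).le

theorem CCWConvex.dist_add_dist_lt [NeZero n] (hp : CCWConvex p) {i j k l : ZMod n}
    (hj : 0 < (j - i).val) (hjk : (j - i).val < (k - i).val) (hkl : (k - i).val < (l - i).val) :
    dist (p i) (p j) + dist (p k) (p l) < dist (p i) (p k) + dist (p j) (p l) := by
  have hk := ZMod.val_sub_of_val_sub_le hjk.le
  have hl := ZMod.val_sub_of_val_sub_le (hjk.trans hkl).le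
  exact dist_add_dist_lt_of_det2_pos (hp.det2_pos hj hjk) (hp.det2_pos hj (hjk.trans hkl))
    (hp.det2_pos (hj.trans hjk) hkl) (hp.det2_pos (by omega) (by omega))

end ConvexPosition

structure IsWeightedNearest {ι α : Type*} [PseudoMetricSpace α] (p : ι → α) (r : α → ℝ)
    (S : Set α) (a : ι → α) : Prop where
  mem : ∀ i, a i ∈ S
  eq_self : ∀ i, p i ∈ S → a i = p i
  le : ∀ i, p i ∉ S → ∀ s ∈ S, dist (p i) (a i) - r (a i) ≤ dist (p i) s - r s

section WeightedNearest

variable {ι α : Type*} [PseudoMetricSpace α] {p : ι → α} {r : α → ℝ} {S : Set α}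

theorem exists_isWeightedNearest (hS : S.Finite) (hne : S.Nonempty) :
    ∃ a, IsWeightedNearest p r S a := by
  classical
  choose b hbS hb using fun i => S.exists_min_image (fun s => dist (p i) s - r s) hS hne
  refine ⟨fun i => if p i ∈ S then p i else b i, ⟨fun i => ?_, fun i hi => if_pos hi,
    fun i hi s hs => ?_⟩⟩
  · split_ifs with h
    exacts [h, hbS i]
  · simpa only [if_neg hi] using hb i s hs

theorem IsWeightedNearest.dist_le {a : ι → α} (ha : IsWeightedNearest p r S a)
    (hdom : ∀ i, ∃ s ∈ S, dist (p i) s ≤ r (p i) + r s) (hr : ∀ i, 0 ≤ r (p i)) (i : ι) :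
    dist (p i) (a i) ≤ r (p i) + r (a i) := by
  by_cases hi : p i ∈ S
  · rw [ha.eq_self i hi, dist_self]
    linarith [hr i]
  · obtain ⟨s, hs, hd⟩ := hdom i
    linarith [ha.le i hi s hs]

end WeightedNearest

section Separation

variable {p : ZMod n → Plane} {r : Plane → ℝ} {S : Set Plane} {a : ZMod n → Plane}

/-- Reassigning `p j` to `p i` and `p k` to `p l` would replace the diagonals `p i p k`, `p j p l`
of a convex quadrilateral by two opposite sides, decreasing the total weighted distance. -/
theorem CCWConvex.not_crossing [NeZero n] (hp : CCWConvex p) (ha : IsWeightedNearest p r S a)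
    {i j k l : ZMod n} (hj : 0 < (j - i).val) (hjk : (j - i).val < (k - i).val)
    (hkl : (k - i).val < (l - i).val) (hi : p i ∈ S) (hl : p l ∈ S) (haj : a j = p l)
    (hak : a k = p i) : False := by
  have hjS : p j ∉ S := fun h => (hp.det2_pos hj (hjk.trans hkl)).ne' <| by
    rw [← ha.eq_self j h, haj, det2_self]
  have hkS : p k ∉ S := fun h => (hp.det2_pos hj hjk).ne' <| by
    rw [← ha.eq_self k h, hak, sub_self, det2_zero_right]
  have hj' := ha.le j hjS (p i) hi
  have hk' := ha.le k hkS (p l) hl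
  rw [haj] at hj'
  rw [hak] at hk'
  linarith [hp.dist_add_dist_lt hj hjk hkl, dist_comm (p i) (p j), dist_comm (p i) (p k)]

/-- `(x - i₀).val` is the counterclockwise position of `p x` seen from the center `p i₀`. -/
theorem CCWConvex.not_between [NeZero n] (hp : CCWConvex p) (ha : IsWeightedNearest p r S a)
    {i₀ i₁ j₁ j₂ k : ZMod n} (h₀ : p i₀ ∈ S) (h₁ : p i₁ ∈ S) (hne : p i₀ ≠ p i₁)
    (hj₁ : a j₁ = p i₁) (hj₂ : a j₂ = p i₁) (hk : a k = p i₀) (hj₁pos : 0 < (j₁ - i₀).val)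
    (hj₁i₁ : (j₁ - i₀).val ≤ (i₁ - i₀).val) (hi₁j₂ : (i₁ - i₀).val ≤ (j₂ - i₀).val)
    (hj₁k : (j₁ - i₀).val < (k - i₀).val) (hkj₂ : (k - i₀).val < (j₂ - i₀).val) : False := by
  have hki₁ : (k - i₀).val ≠ (i₁ - i₀).val := fun e => hne <| by
    rw [← hk, ZMod.eq_of_val_sub_eq e, ha.eq_self i₁ h₁]
  rcases hki₁.lt_or_gt with hlt | hgt
  · exact hp.not_crossing ha hj₁pos hj₁k hlt h₀ h₁ hj₁ hk
  · have e₁ := ZMod.val_sub_of_val_sub_le hgt.le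
    have e₂ := ZMod.val_sub_of_val_sub_le hi₁j₂
    have e₃ := ZMod.val_sub_of_val_sub_lt (x := i₁) (y := i₀) (i := i₀)
      (by rw [sub_self, ZMod.val_zero]; omega)
    rw [sub_self, ZMod.val_zero] at e₃
    have := ZMod.val_lt (j₂ - i₀)
    exact hp.not_crossing ha (i := i₁) (j := k) (k := j₂) (l := i₀) (by omega) (by omega)
      (by omega) h₁ h₀ hk hj₂

theorem CCWConvex.lineSep_image_of_forall_eq (hp : CCWConvex p) {i₀ i₁ : ZMod n}
    (hne : p i₀ ≠ p i₁) {A B : Set (ZMod n)} (hB : ∀ k ∈ B, k = i₁) :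
    LineSep (p '' A) (p '' B) := by
  refine lineSep_of_det2 (v := p (i₁ + 1) - p i₁) (x₀ := p i₁) ?_
    (by rintro _ ⟨k, -, rfl⟩; exact hp.det2_edge_nonneg i₁ k) ?_
  · by_cases h : i₀ = i₁ + 1
    · rw [← h]
      exact sub_ne_zero.2 hne
    · exact fun hv => (hp i₁ i₀ (fun e => hne (congrArg p e)) h).ne' (by rw [hv]; simp [det2])
  · rintro _ ⟨k, hk, rfl⟩
    rw [hB k hk, sub_self, det2_zero_right]

/-- The chord `p j₁ p j₂` separates the points on the arc from `j₁` to `j₂` from the others. -/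
theorem CCWConvex.lineSep_image_of_arc [NeZero n] (hp : CCWConvex p) {i₀ j₁ j₂ : ZMod n}
    (hj : (j₁ - i₀).val < (j₂ - i₀).val) {A B : Set (ZMod n)} (hAne : A.Nonempty)
    (hA : ∀ k ∈ A, (k - i₀).val < (j₁ - i₀).val ∨ (j₂ - i₀).val < (k - i₀).val)
    (hB : ∀ k ∈ B, (j₁ - i₀).val ≤ (k - i₀).val ∧ (k - i₀).val ≤ (j₂ - i₀).val) :
    LineSep (p '' A) (p '' B) := by
  have e₂ := ZMod.val_sub_of_val_sub_le hj.le
  have hpos : ∀ k ∈ A, 0 < det2 (p j₂ - p j₁) (p k - p j₁) := by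
    intro k hk
    refine hp.det2_pos (by omega) ?_
    rcases hA k hk with h | h
    · rw [ZMod.val_sub_of_val_sub_lt h]
      have := ZMod.val_lt (j₂ - i₀)
      omega
    · rw [ZMod.val_sub_of_val_sub_le (hj.le.trans h.le)]
      omega
  obtain ⟨k₀, hk₀⟩ := hAne
  refine lineSep_of_det2 (v := p j₂ - p j₁) (x₀ := p j₁)
    (fun hv => (hpos k₀ hk₀).ne' (by rw [hv]; simp [det2]))
    (by rintro _ ⟨k, hk, rfl⟩; exact (hpos k hk).le) ?_
  rintro _ ⟨k, hk, rfl⟩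
  obtain ⟨h₁, h₂⟩ := hB k hk
  rcases h₁.eq_or_lt with e | h₁
  · rw [← ZMod.eq_of_val_sub_eq e, sub_self, det2_zero_right]
  rcases h₂.eq_or_lt with e | h₂
  · rw [ZMod.eq_of_val_sub_eq e, det2_self]
  have ek := ZMod.val_sub_of_val_sub_le h₁.le
  have := hp.det2_pos (i := j₁) (j := k) (k := j₂) (by omega) (by omega)
  rw [det2_comm]
  linarith

theorem CCWConvex.lineSep_image [NeZero n] (hp : CCWConvex p) (ha : IsWeightedNearest p r S a)
    {i₀ i₁ : ZMod n} (h₀ : p i₀ ∈ S) (h₁ : p i₁ ∈ S) (hne : p i₀ ≠ p i₁) :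
    LineSep (p '' {i | a i = p i₀}) (p '' {i | a i = p i₁}) := by
  classical
  have ha₁ := ha.eq_self i₁ h₁
  set I := Finset.univ.filter fun i => a i = p i₁
  have hI : I.Nonempty := ⟨i₁, by simp [I, ha₁]⟩
  obtain ⟨j₁, hj₁, hmin⟩ := I.exists_min_image (fun i => (i - i₀).val) hI
  obtain ⟨j₂, hj₂, hmax⟩ := I.exists_max_image (fun i => (i - i₀).val) hI
  simp only [I, Finset.mem_filter, Finset.mem_univ, true_and] at hj₁ hj₂ hmin hmax
  have off_ne : ∀ {j k}, a j = p i₁ → a k = p i₀ → (k - i₀).val ≠ (j - i₀).val :=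
    fun hj hk e => hne <| by rw [← hk, ZMod.eq_of_val_sub_eq e, hj]
  rcases (hmin j₂ hj₂).eq_or_lt with heq | hlt
  · refine hp.lineSep_image_of_forall_eq hne fun x hx => ZMod.eq_of_val_sub_eq (i := i₀) ?_
    have := hmin x hx; have := hmax x hx; have := hmin i₁ ha₁; have := hmax i₁ ha₁
    omega
  · refine hp.lineSep_image_of_arc hlt ⟨i₀, ha.eq_self i₀ h₀⟩ (fun k hk => ?_)
      fun k hk => ⟨hmin k hk, hmax k hk⟩
    by_contra! h
    have hj₁pos : 0 < (j₁ - i₀).val := by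
      have := off_ne hj₁ (ha.eq_self i₀ h₀)
      rw [sub_self, ZMod.val_zero] at this
      omega
    exact hp.not_between ha h₀ h₁ hne hj₁ hj₂ hk hj₁pos (hmin i₁ ha₁) (hmax i₁ ha₁)
      (h.1.lt_of_ne (off_ne hj₁ hk).symm) (h.2.lt_of_ne (off_ne hj₂ hk))

end Separation

section Runs

variable {α : Type*} (c : ℕ → α) (N : ℕ)

def nextBreak (t : ℕ) : ℕ :=
  sInf {u | t < u ∧ (N ≤ u ∨ c u ≠ c t)}

def runStart (k : ℕ) : ℕ :=
  (nextBreak c N)^[k] 0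

def runCount : ℕ :=
  sInf {k | N ≤ runStart c N k}

lemma nextBreak_spec (t : ℕ) :
    t < nextBreak c N t ∧ (N ≤ nextBreak c N t ∨ c (nextBreak c N t) ≠ c t) :=
  Nat.sInf_mem (s := {u | t < u ∧ (N ≤ u ∨ c u ≠ c t)})
    ⟨max N (t + 1), by omega, Or.inl (le_max_left _ _)⟩

lemma eq_of_lt_nextBreak {t u : ℕ} (h₁ : t < u) (h₂ : u < nextBreak c N t) : c u = c t := by
  by_contra h
  exact Nat.notMem_of_lt_sInf h₂ ⟨h₁, Or.inr h⟩

lemma nextBreak_le {t : ℕ} (h : t < N) : nextBreak c N t ≤ N :=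
  Nat.sInf_le ⟨h, Or.inl le_rfl⟩

lemma runStart_zero : runStart c N 0 = 0 := rfl

lemma runStart_succ (k : ℕ) : runStart c N (k + 1) = nextBreak c N (runStart c N k) :=
  Function.iterate_succ_apply' _ _ _

lemma runStart_strictMono : StrictMono (runStart c N) :=
  strictMono_nat_of_lt_succ fun k => runStart_succ c N k ▸ (nextBreak_spec c N _).1

lemma le_runStart_runCount : N ≤ runStart c N (runCount c N) :=
  Nat.sInf_mem (s := {k | N ≤ runStart c N k}) ⟨N, (runStart_strictMono c N).le_apply⟩

lemma runStart_lt_of_lt_runCount {k : ℕ} (h : k < runCount c N) : runStart c N k < N :=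
  not_le.1 (Nat.notMem_of_lt_sInf (s := {k | N ≤ runStart c N k}) h)

lemma runCount_pos (hN : 0 < N) : 0 < runCount c N :=
  Nat.pos_of_ne_zero fun h => by
    have := le_runStart_runCount c N
    rw [h, runStart_zero] at this
    omega

lemma runStart_runCount (hN : 0 < N) : runStart c N (runCount c N) = N := by
  obtain ⟨k, hk⟩ := Nat.exists_eq_succ_of_ne_zero (runCount_pos c N hN).ne'
  refine le_antisymm ?_ (le_runStart_runCount c N)
  rw [hk, runStart_succ]
  exact nextBreak_le c N (runStart_lt_of_lt_runCount c N (by omega))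

lemma eq_runStart_of_mem_run {k t : ℕ} (h₁ : runStart c N k ≤ t) (h₂ : t < runStart c N (k + 1)) :
    c t = c (runStart c N k) := by
  rcases h₁.eq_or_lt with rfl | h
  · rfl
  · exact eq_of_lt_nextBreak c N h (runStart_succ c N k ▸ h₂)

lemma runStart_succ_ne {k : ℕ} (h : k + 1 < runCount c N) :
    c (runStart c N (k + 1)) ≠ c (runStart c N k) := by
  have := runStart_lt_of_lt_runCount c N h
  rw [runStart_succ] at this ⊢
  exact (nextBreak_spec c N _).2.resolve_left (not_le.2 this)

lemma exists_mem_run {t : ℕ} (ht : t < N) :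
    ∃ k < runCount c N, runStart c N k ≤ t ∧ t < runStart c N (k + 1) := by
  have hne : {K | t < runStart c N K}.Nonempty :=
    ⟨t + 1, (runStart_strictMono c N).le_apply⟩
  have hK := Nat.sInf_mem hne
  obtain ⟨k, hk⟩ := Nat.exists_eq_succ_of_ne_zero (n := sInf {K | t < runStart c N K}) <| by
    intro h
    rw [h, Set.mem_ofPred_eq, runStart_zero] at hK
    exact Nat.not_lt_zero _ hK
  have hkt : runStart c N k ≤ t := not_lt.1 (Nat.notMem_of_lt_sInf (s := {K | t < runStart c N K})
    (by omega))
  refine ⟨k, ?_, hkt, by rwa [hk] at hK⟩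
  by_contra! h
  have := (runStart_strictMono c N).monotone h
  linarith [le_runStart_runCount c N]

structure IsRunDecomposition (m : ℕ) (d : ℕ → ℕ) : Prop where
  strictMono : StrictMono d
  zero : d 0 = 0
  last : d m = N
  eq_of_mem : ∀ k t, d k ≤ t → t < d (k + 1) → c t = c (d k)
  succ_ne : ∀ k, k + 1 < m → c (d (k + 1)) ≠ c (d k)
  exists_mem : ∀ t < N, ∃ k < m, d k ≤ t ∧ t < d (k + 1)

theorem exists_isRunDecomposition (hN : 0 < N) : ∃ m d, IsRunDecomposition c N m d :=
  ⟨runCount c N, runStart c N, runStart_strictMono c N, runStart_zero c N,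
    runStart_runCount c N hN, fun _ _ => eq_runStart_of_mem_run c N,
    fun _ => runStart_succ_ne c N, fun _ => exists_mem_run c N⟩

variable {c N}

theorem IsRunDecomposition.apply_zero_ne_apply_last {m : ℕ} {d : ℕ → ℕ}
    (hR : IsRunDecomposition c N m d) (hm : 1 < m)
    (hc : c (N - 1) = c 0 → ∀ t, c (t + 1) = c t) : c (d 0) ≠ c (d (m - 1)) := by
  intro heq
  have hlt := hR.strictMono (Nat.sub_lt (by omega) one_pos : m - 1 < m)
  rw [hR.last] at hlt
  have hlast := hR.eq_of_mem (m - 1) (N - 1) (by omega)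
    (by rw [Nat.sub_add_cancel (by omega), hR.last]; omega)
  have hconst : ∀ t, c t = c 0 := fun t => by
    induction t with
    | zero => rfl
    | succ t ih => rw [hc (by rw [hlast, ← heq, hR.zero]) t, ih]
  exact hR.succ_ne 0 hm ((hconst _).trans (hconst _).symm)

end Runs

lemma ZMod.sum_filter_val_lt {M : Type*} [AddCommMonoid M] (g : ℕ → M) {K : ℕ} (hK : K ≤ m) :
    ∑ j ∈ Finset.univ.filter (fun j : ZMod m => j.val < K), g j.val =
      ∑ k ∈ Finset.range K, g k := by
  rw [← Finset.sum_image fun x _ y _ h => ZMod.val_injective m h]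
  congr 1
  ext k
  simp only [Finset.mem_image, Finset.mem_filter, Finset.mem_univ, true_and, Finset.mem_range]
  refine ⟨fun ⟨j, hj, hjk⟩ => hjk ▸ hj, fun hk => ⟨k, ?_, ?_⟩⟩ <;>
    rw [ZMod.val_cast_of_lt (by omega)]
  exact hk

theorem IsRunDecomposition.apply_succ_ne {α : Type*} {c : ℕ → α} {N : ℕ}
    {d : ℕ → ℕ} (hR : IsRunDecomposition c N m d) (hc : c (N - 1) = c 0 → ∀ t, c (t + 1) = c t)
    {j : ZMod m} (hj : j + 1 ≠ j) : c (d (j + 1).val) ≠ c (d j.val) := by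
  have hm : 1 < m := by
    by_contra h
    obtain rfl : m = 1 := by have := Nat.pos_of_neZero m; omega
    exact hj (Subsingleton.elim _ _)
  by_cases hjm : j.val + 1 < m
  · have hv : (j + 1).val = j.val + 1 := by
      rw [ZMod.val_add_of_lt] <;> rw [ZMod.val_one'' (by omega)]
      exact hjm
    rw [hv]
    exact hR.succ_ne _ hjm
  · have hjm' : j.val = m - 1 := by have := ZMod.val_lt j; omega
    have hj₁ : j + 1 = 0 := by
      rw [← ZMod.natCast_zmod_val j, ← Nat.cast_add_one, hjm', Nat.sub_add_cancel hm.le,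
        ZMod.natCast_self]
    rw [hj₁, ZMod.val_zero, hjm']
    exact hR.apply_zero_ne_apply_last hm hc

def IsRunDecomposition.toSublistPartition {α : Type*} {c : ℕ → α} {d : ℕ → ℕ}
    (hR : IsRunDecomposition c n m d) (st : ZMod n) : SublistPartition n m where
  start := st
  len j := d (j.val + 1) - d j.val
  len_pos j := Nat.sub_pos_of_lt (hR.strictMono (Nat.lt_add_one _))
  len_sum := by
    have := ZMod.sum_filter_val_lt (m := m) (fun k => d (k + 1) - d k) le_rfl
    rwa [Finset.filter_true_of_mem fun j _ => ZMod.val_lt j,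
      Finset.sum_range_tsub hR.strictMono.monotone, hR.zero, hR.last, Nat.sub_zero] at this

theorem IsRunDecomposition.offset_toSublistPartition {α : Type*} {c : ℕ → α}
    {d : ℕ → ℕ} (hR : IsRunDecomposition c n m d) (st : ZMod n) (j : ZMod m) :
    (hR.toSublistPartition st).offset j = d j.val :=
  (ZMod.sum_filter_val_lt (fun k => d (k + 1) - d k) (ZMod.val_lt j).le).trans <| by
    rw [Finset.sum_range_tsub hR.strictMono.monotone, hR.zero, Nat.sub_zero]

theorem exists_sublistPartition_runs [NeZero n] {α : Type*} (f : ZMod n → α) :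
    ∃ m, ∃ _ : NeZero m, ∃ A : SublistPartition n m, ∃ φ : ZMod m → α,
      (∀ j, ∀ t < A.len j, f (A.start + A.offset j + t) = φ j) ∧
      (∀ i, ∃ j, ∃ t < A.len j, A.start + A.offset j + t = i) ∧
      (∀ j, j + 1 ≠ j → φ (j + 1) ≠ φ j) := by
  -- start at a change of value, so that the last run and the first run differ
  obtain ⟨st, hst⟩ : ∃ st : ZMod n, f (st - 1) = f st → ∀ i, f (i - 1) = f i := by
    by_cases h : ∃ i, f (i - 1) ≠ f i
    · obtain ⟨i, hi⟩ := h
      exact ⟨i, fun h' => absurd h' hi⟩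
    · exact ⟨0, fun _ i => not_not.1 (not_exists.1 h i)⟩
  have hn : 0 < n := Nat.pos_of_neZero n
  set c : ℕ → α := fun t => f (st + t)
  have hc : c (n - 1) = c 0 → ∀ t, c (t + 1) = c t := fun h t => by
    have hlast : st + ((n - 1 : ℕ) : ZMod n) = st - 1 := by
      rw [Nat.cast_pred hn, ZMod.natCast_self]
      ring
    have hconst := hst (by simpa only [c, hlast, Nat.cast_zero, add_zero] using h)
    simp only [c, ← hconst (st + (t + 1 : ℕ))]
    congr 1
    push_cast
    ring
  obtain ⟨m, d, hR⟩ := exists_isRunDecomposition c n hn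
  have : NeZero m := ⟨fun h => by have := hR.last; rw [h, hR.zero] at this; omega⟩
  set A := hR.toSublistPartition st
  have hpos : ∀ j (t : ℕ), A.start + A.offset j + t = st + ((d j.val + t : ℕ) : ZMod n) :=
    fun j t => by
      rw [hR.offset_toSublistPartition]
      change st + _ + _ = _
      push_cast
      ring
  refine ⟨m, inferInstance, A, fun j => c (d j.val), fun j t ht => ?_, fun i => ?_,
    fun j hj => hR.apply_succ_ne hc hj⟩
  · change t < d (j.val + 1) - d j.val at ht
    rw [hpos]
    exact hR.eq_of_mem _ _ (by omega) (by omega)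
  · obtain ⟨k, hk, h₁, h₂⟩ := hR.exists_mem _ (ZMod.val_lt (i - st))
    have hkv : (k : ZMod m).val = k := ZMod.val_cast_of_lt hk
    refine ⟨k, (i - st).val - d k, by change _ < d (_ + 1) - d _; rw [hkv]; omega, ?_⟩
    rw [hpos, hkv, Nat.add_sub_cancel' h₁, ZMod.natCast_zmod_val, add_sub_cancel]

theorem group_eq_image {A : SublistPartition n m} {p : ZMod n → Plane} {φ : ZMod m → Plane}
    {f : ZMod n → Plane} (hf : ∀ j, ∀ t < A.len j, f (A.start + A.offset j + t) = φ j)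
    (hcover : ∀ i, ∃ j, ∃ t < A.len j, A.start + A.offset j + t = i) (s : Plane) :
    group A p φ s = p '' {i | f i = s} := by
  ext x
  constructor
  · rintro ⟨j, rfl, t, ht, rfl⟩
    exact ⟨_, hf j t ht, rfl⟩
  · rintro ⟨i, rfl, rfl⟩
    obtain ⟨j, t, ht, rfl⟩ := hcover i
    exact ⟨j, (hf j t ht).symm, t, ht, rfl⟩

theorem line_separable_property_general {n : ℕ} [NeZero n]
    (p : ZMod n → Plane) (hccw : CCWConvex p)
    (r : Plane → ℝ) (hr : ∀ i, 0 ≤ r (p i))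
    (S : Set Plane) (hS : IsDominating p r S) :
    ∃ m : ℕ, ∃ _ : NeZero m, ∃ A : SublistPartition n m, ∃ φ : ZMod m → Plane,
      IsLemma31Assignment A p r S φ := by
  have hdom : ∀ i, ∃ s ∈ S, dist (p i) s ≤ r (p i) + r s := fun i => hS.2 (p i) ⟨i, rfl⟩
  obtain ⟨s₀, hs₀, -⟩ := hdom 0
  obtain ⟨a, ha⟩ := exists_isWeightedNearest (p := p) (r := r)
    ((Set.finite_range p).subset hS.1) ⟨s₀, hs₀⟩
  obtain ⟨m, _, A, φ, hφ, hcover, hadj⟩ := exists_sublistPartition_runs a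
  have hgroup := group_eq_image (p := p) hφ hcover
  refine ⟨m, inferInstance, A, φ, ⟨fun j => ?_, ?_⟩, ?_, fun s hs => ?_, hadj⟩
  · rw [← hφ j 0 (A.len_pos j)]
    exact ha.mem _
  · rintro j _ ⟨t, ht, rfl⟩
    rw [← hφ j t ht]
    exact ha.dist_le hdom hr _
  · intro s hs s' hs' hne
    obtain ⟨i₀, rfl⟩ := hS.1 hs
    obtain ⟨i₁, rfl⟩ := hS.1 hs'
    rw [hgroup, hgroup]
    exact hccw.lineSep_image ha hs hs' hne
  · obtain ⟨i, rfl⟩ := hS.1 hs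
    change p i ∈ group A p φ (p i)
    rw [hgroup]
    exact ⟨i, ha.eq_self i hs, rfl⟩

/-- **Line-separable property (Lemma 3.1).** For a minimum-cardinality dominating set
`S` of the disk graph of points in convex position, there is a partition of the points
into nonempty sublists listed counterclockwise and a line-separable assignment of the
sublists to points of `S` such that every `s ∈ S` lies in one of its own sublists and
cyclically adjacent sublists are assigned to different points. -/
theorem line_separable_property {n : ℕ} [NeZero n]
    (p : ZMod n → Plane) (hccw : CCWConvex p)
    (r : Plane → ℝ) (hr : ∀ i, 0 ≤ r (p i))
    (S : Set Plane) (hS : IsDominating p r S)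
    (hmin : ∀ T : Set Plane, IsDominating p r T → S.ncard ≤ T.ncard) :
    ∃ m : ℕ, ∃ _ : NeZero m, ∃ A : SublistPartition n m, ∃ φ : ZMod m → Plane,
      IsLemma31Assignment A p r S φ :=
  line_separable_property_general p hccw r hr S hS

end
end

section
/- (Lemma 3.2.) Let P be a finite set of points in the plane in convex position with radii r_p ≥ 0, let S be a dominating set of the disk graph G(P), and let φ : 𝒜 → S be a Lemma-3.1 assignment. Then there exists a point p ∈ S whose group 𝒜_p consists of exactly one sublist (namely the main sublist of p). -/
/-!
Read counterclockwise, the centres of the sublists never alternate as `s, s', s, s'` with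
`s ≠ s'`: the first points of those four sublists are in convex position, so the segments joining
the two points of `s` and the two points of `s'` are crossing diagonals, and no line separates
them, against line-separability of the groups of `s` and `s'`. In a cyclic sequence with distinct
neighbours and no such alternation, take a closest pair of equal entries `f i = f (i + d)`; the
entry `f (i + 1)` then occurs only once, and the only sublist assigned to it is its main sublist.
-/

noncomputable section

variable {n m : ℕ} [NeZero m]

theorem LineSep.mono {A B A' B' : Set Plane} (h : LineSep A B) (hA : A' ⊆ A) (hB : B' ⊆ B) :
    LineSep A' B' := by
  obtain ⟨u, hu, c, hAc, hBc⟩ := h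
  exact ⟨u, hu, c, fun a ha => hAc a (hA ha), fun b hb => hBc b (hB hb)⟩

theorem LinearMap.apply_plane (u : Plane →ₗ[ℝ] ℝ) (x : Plane) :
    u x = x 0 * u (EuclideanSpace.single 0 1) + x 1 * u (EuclideanSpace.single 1 1) := by
  have hx : x = x 0 • EuclideanSpace.single (0 : Fin 2) (1 : ℝ) +
      x 1 • EuclideanSpace.single (1 : Fin 2) (1 : ℝ) := by
    ext i
    fin_cases i <;> simp
  conv_lhs => rw [hx]
  simp only [map_add, map_smul, smul_eq_mul]

/-- Cramer's rule in the plane, read through a linear functional. -/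
theorem det2_mul_apply (u : Plane →ₗ[ℝ] ℝ) (v w x : Plane) :
    det2 v w * u x = det2 x w * u v + det2 v x * u w := by
  rw [u.apply_plane x, u.apply_plane v, u.apply_plane w]
  simp only [det2]
  ring

theorem det2_eq_zero_of_apply_eq_zero {u : Plane →ₗ[ℝ] ℝ} (hu : u ≠ 0) {v w : Plane}
    (hv : u v = 0) (hw : u w = 0) : det2 v w = 0 := by
  by_contra hvw
  refine hu (LinearMap.ext fun x => ?_)
  have := det2_mul_apply u v w x
  rw [hv, hw, mul_zero, mul_zero, add_zero] at this
  exact (mul_eq_zero.mp this).resolve_left hvw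

theorem det2_sub_rotate (a b c : Plane) : det2 (b - a) (c - a) = det2 (c - b) (a - b) := by
  simp only [det2, PiLp.sub_apply]
  ring

/-- Grassmann–Plücker relation for determinants of plane vectors. -/
theorem det2_mul_det2_plucker (e b c d : Plane) :
    det2 e c * det2 b d = det2 e b * det2 c d + det2 e d * det2 b c := by
  simp only [det2]
  ring

theorem not_lineSep_of_det2_pos {x₁ x₂ x₃ x₄ : Plane}
    (h₁₂₃ : 0 < det2 (x₂ - x₁) (x₃ - x₁)) (h₁₂₄ : 0 < det2 (x₂ - x₁) (x₄ - x₁))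
    (h₁₃₄ : 0 < det2 (x₃ - x₁) (x₄ - x₁)) (h₂₃₄ : 0 < det2 (x₃ - x₂) (x₄ - x₂)) :
    ¬ LineSep {x₁, x₃} {x₂, x₄} := by
  rintro ⟨u, hu, e, h₁₃, h₂₄⟩
  simp only [Set.mem_insert_iff, Set.mem_singleton_iff, forall_eq_or_imp, forall_eq] at h₁₃ h₂₄
  -- Cramer's rule for `x₄ - x₁` in terms of `x₂ - x₁` and `x₃ - x₁`: all four terms have a
  -- known sign, so `u = e` at `x₁`, `x₂` and `x₃`.
  have key : det2 (x₂ - x₁) (x₃ - x₁) * (u x₄ - e) + det2 (x₃ - x₁) (x₄ - x₁) * (u x₂ - e)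
      = det2 (x₃ - x₂) (x₄ - x₂) * (u x₁ - e) + det2 (x₂ - x₁) (x₄ - x₁) * (u x₃ - e) := by
    rw [u.apply_plane x₁, u.apply_plane x₂, u.apply_plane x₃, u.apply_plane x₄]
    simp only [det2, PiLp.sub_apply]
    ring
  have hu₂ : u x₂ = e := by nlinarith
  have hu₁ : u x₁ = e := by nlinarith
  have hu₃ : u x₃ = e := by nlinarith
  refine h₁₂₃.ne' (det2_eq_zero_of_apply_eq_zero hu ?_ ?_) <;> simp [hu₁, hu₂, hu₃]

theorem ZMod.natCast_ne_natCast_of_lt {x y : ℕ} (hx : x < n) (hy : y < n) (hxy : x ≠ y) :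
    (x : ZMod n) ≠ y := by
  intro h
  have := (ZMod.natCast_eq_natCast_iff' x y n).mp h
  rw [Nat.mod_eq_of_lt hx, Nat.mod_eq_of_lt hy] at this
  exact hxy this

namespace CCWConvex

variable {p : ZMod n → Plane} (hccw : CCWConvex p) (z : ZMod n)
include hccw

theorem det2_succ_pos {x y : ℕ} (hx : x + 1 < n) (hy : y < n) (hyx : y ≠ x)
    (hyx₁ : y ≠ x + 1) :
    0 < det2 (p (z + (x + 1 : ℕ)) - p (z + x)) (p (z + y) - p (z + x)) := by
  have hsucc : z + (x : ZMod n) + 1 = z + ((x + 1 : ℕ) : ZMod n) := by push_cast; ring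
  have := hccw (z + x) (z + y)
    ((add_right_injective z).ne (ZMod.natCast_ne_natCast_of_lt hy (by omega) hyx))
    (hsucc ▸ (add_right_injective z).ne (ZMod.natCast_ne_natCast_of_lt hy hx hyx₁))
  rwa [hsucc] at this

theorem det2_pos_s7 {a b c : ℕ} (hab : a < b) (hbc : b < c) (hcn : c < n) :
    0 < det2 (p (z + b) - p (z + a)) (p (z + c) - p (z + a)) := by
  induction c, (hbc : b + 1 ≤ c) using Nat.le_induction with
  | base =>
    rw [det2_sub_rotate]
    exact hccw.det2_succ_pos z hcn (by omega) (by omega) (by omega)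
  | succ c hbc ih =>
    obtain rfl | hab₁ := eq_or_ne b (a + 1)
    · exact hccw.det2_succ_pos z (by omega) hcn (by omega) (by omega)
    -- Pivot around the edge from `a` to `a + 1`: every point lies to its left.
    have hplucker := det2_mul_det2_plucker (p (z + (a + 1 : ℕ)) - p (z + a))
      (p (z + b) - p (z + a)) (p (z + c) - p (z + a)) (p (z + (c + 1 : ℕ)) - p (z + a))
    have hc : 0 < det2 (p (z + c) - p (z + a)) (p (z + (c + 1 : ℕ)) - p (z + a)) := by
      rw [det2_sub_rotate]
      exact hccw.det2_succ_pos z hcn (by omega) (by omega) (by omega)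
    have hac := hccw.det2_succ_pos z (x := a) (y := c) (by omega) (by omega) (by omega) (by omega)
    refine pos_of_mul_pos_right (hplucker ▸ ?_) hac.le
    have hab := hccw.det2_succ_pos z (x := a) (y := b) (by omega) (by omega) (by omega) hab₁
    have hac₁ := hccw.det2_succ_pos z (x := a) (y := c + 1) (by omega) hcn (by omega) (by omega)
    have := ih (by omega)
    positivity

theorem not_lineSep {a b c d : ℕ} (hab : a < b) (hbc : b < c) (hcd : c < d) (hdn : d < n) :
    ¬ LineSep {p (z + a), p (z + c)} {p (z + b), p (z + d)} :=
  not_lineSep_of_det2_pos (hccw.det2_pos_s7 z hab hbc (by omega)) (hccw.det2_pos_s7 z hab (by omega) hdn)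
    (hccw.det2_pos_s7 z (by omega) hcd hdn) (hccw.det2_pos_s7 z hbc hcd hdn)

end CCWConvex

namespace SublistPartition

variable (A : SublistPartition n m)

theorem offset_lt_offset {j j' : ZMod m} (h : j.val < j'.val) : A.offset j < A.offset j' := by
  refine Finset.sum_lt_sum_of_subset (i := j) ?_ (by simpa using h) (by simp) (A.len_pos j)
    (fun _ _ _ => Nat.zero_le _)
  intro t ht
  simp only [Finset.mem_filter, Finset.mem_univ, true_and] at ht ⊢
  omega

theorem offset_lt (j : ZMod m) : A.offset j < n := by
  have hj : j ∉ Finset.univ.filter (fun j' : ZMod m => j'.val < j.val) := by simp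
  calc A.offset j < A.offset j + A.len j := Nat.lt_add_of_pos_right (A.len_pos j)
    _ = ∑ t ∈ insert j (Finset.univ.filter (fun j' : ZMod m => j'.val < j.val)), A.len t := by
      rw [Finset.sum_insert hj, add_comm, offset]
    _ ≤ ∑ t, A.len t := Finset.sum_le_sum_of_subset (Finset.subset_univ _)
    _ = n := A.len_sum

theorem start_add_offset_mem_block (p : ZMod n → Plane) (j : ZMod m) :
    p (A.start + A.offset j) ∈ A.block p j :=
  ⟨0, A.len_pos j, by simp⟩

theorem not_lineSep_group {p : ZMod n → Plane} (hccw : CCWConvex p) (φ : ZMod m → Plane)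
    {w₁ w₂ w₃ w₄ : ZMod m} (h₁₂ : w₁.val < w₂.val) (h₂₃ : w₂.val < w₃.val)
    (h₃₄ : w₃.val < w₄.val) (h₁₃ : φ w₁ = φ w₃) (h₂₄ : φ w₂ = φ w₄) :
    ¬ LineSep (group A p φ (φ w₁)) (group A p φ (φ w₂)) := by
  have hmem : ∀ w, p (A.start + A.offset w) ∈ group A p φ (φ w) :=
    fun w => ⟨w, rfl, A.start_add_offset_mem_block p w⟩
  intro hsep
  refine hccw.not_lineSep A.start (A.offset_lt_offset h₁₂) (A.offset_lt_offset h₂₃)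
    (A.offset_lt_offset h₃₄) (A.offset_lt w₄) (hsep.mono ?_ ?_)
  · exact Set.insert_subset (hmem w₁) (Set.singleton_subset_iff.mpr (h₁₃ ▸ hmem w₃))
  · exact Set.insert_subset (hmem w₂) (Set.singleton_subset_iff.mpr (h₂₄ ▸ hmem w₄))

end SublistPartition

theorem exists_forall_eq_imp_eq_of_noncrossing {α : Type*} {N : ℕ} (f : ℕ → α) (hN : 0 < N)
    (hadj : ∀ i, i + 1 < N → f (i + 1) ≠ f i)
    (hcross : ∀ a b c d, a < b → b < c → c < d → d < N → f a = f c → f b = f d → f a = f b) :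
    ∃ i < N, ∀ j < N, f j = f i → j = i := by
  classical
  by_cases hrep : ∃ d i, 0 < d ∧ i + d < N ∧ f (i + d) = f i
  swap
  · push Not at hrep
    refine ⟨0, hN, fun j hj hj0 => ?_⟩
    by_contra hne
    exact hrep j 0 (by omega) (by omega) (by simpa using hj0)
  -- The value right after the closest repetition `f i = f (i + d)` occurs only once.
  obtain ⟨i, hd, hiN, hrep_i⟩ := Nat.find_spec hrep
  set d := Nat.find hrep
  refine ⟨i + 1, by omega, fun j hj hji => ?_⟩
  have hd₁ : d ≠ 1 := by
    rintro hd₁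
    rw [hd₁] at hrep_i
    exact hadj i (by omega) hrep_i
  by_contra hne
  rcases lt_trichotomy j i with hj_lt | rfl | hij
  · exact hadj i (by omega) (hji.symm.trans
      (hcross j i (i + 1) (i + d) hj_lt (by omega) (by omega) hiN hji hrep_i.symm))
  · exact hadj j (by omega) hji.symm
  rcases lt_trichotomy j (i + d) with hj_lt | rfl | hj_gt
  · refine Nat.find_min hrep (m := j - (i + 1)) (by omega) ⟨i + 1, by omega, by omega, ?_⟩
    rwa [show i + 1 + (j - (i + 1)) = j by omega]
  · exact hadj i (by omega) (hji.symm.trans hrep_i)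
  · exact hadj i (by omega) (hcross i (i + 1) (i + d) j (by omega) (by omega) hj_gt hj
      hrep_i.symm hji.symm).symm

theorem ZMod.exists_forall_eq_imp_eq_of_noncrossing {α : Type*} (φ : ZMod m → α)
    (hadj : ∀ j : ZMod m, j + 1 ≠ j → φ (j + 1) ≠ φ j)
    (hcross : ∀ w₁ w₂ w₃ w₄ : ZMod m, w₁.val < w₂.val → w₂.val < w₃.val → w₃.val < w₄.val →
      φ w₁ = φ w₃ → φ w₂ = φ w₄ → φ w₁ = φ w₂) :
    ∃ j, ∀ j', φ j' = φ j → j' = j := by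
  obtain ⟨i, -, hi⟩ := _root_.exists_forall_eq_imp_eq_of_noncrossing (fun i : ℕ => φ i)
    (NeZero.pos m)
    (fun i hi => by
      push_cast
      exact hadj i (by exact_mod_cast ZMod.natCast_ne_natCast_of_lt hi (by omega) (by omega)))
    (fun a b c d hab hbc hcd hdm => hcross a b c d
      (by rwa [ZMod.val_cast_of_lt (by omega), ZMod.val_cast_of_lt (by omega)])
      (by rwa [ZMod.val_cast_of_lt (by omega), ZMod.val_cast_of_lt (by omega)])
      (by rwa [ZMod.val_cast_of_lt (by omega), ZMod.val_cast_of_lt hdm]))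
  refine ⟨i, fun j hj => ?_⟩
  rw [← ZMod.natCast_zmod_val j, hi j.val (ZMod.val_lt j) (by rwa [ZMod.natCast_zmod_val])]

theorem exists_center_with_single_sublist_general {n m : ℕ} [NeZero m]
    (p : ZMod n → Plane) (hccw : CCWConvex p)
    (r : Plane → ℝ)
    (S : Set Plane)
    (A : SublistPartition n m) (φ : ZMod m → Plane)
    (hφ : IsLemma31Assignment A p r S φ) :
    ∃ s ∈ S, ∃ j : ZMod m, φ j = s ∧ s ∈ A.block p j ∧
      ∀ j' : ZMod m, φ j' = s → j' = j := by
  obtain ⟨⟨hφS, -⟩, hsep, hmain, hadj⟩ := hφ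
  obtain ⟨j, hj⟩ := ZMod.exists_forall_eq_imp_eq_of_noncrossing φ hadj
    fun w₁ w₂ w₃ w₄ h₁₂ h₂₃ h₃₄ h₁₃ h₂₄ => by_contra fun hne =>
      A.not_lineSep_group hccw φ h₁₂ h₂₃ h₃₄ h₁₃ h₂₄ (hsep _ (hφS w₁) _ (hφS w₂) hne)
  obtain ⟨j', hj'φ, hj'⟩ := hmain (φ j) (hφS j)
  exact ⟨φ j, hφS j, j, rfl, hj j' hj'φ ▸ hj', hj⟩

/-- **Lemma 3.2.** If `S` is a dominating set of the disk graph of points in convex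
position and `φ` is a Lemma-3.1 assignment, then some point `s ∈ S` has exactly one
sublist assigned to it (namely its main sublist, which contains `s`). -/
theorem exists_center_with_single_sublist {n m : ℕ} [NeZero n] [NeZero m]
    (p : ZMod n → Plane) (hccw : CCWConvex p)
    (r : Plane → ℝ) (hr : ∀ i, 0 ≤ r (p i))
    (S : Set Plane) (hS : IsDominating p r S)
    (A : SublistPartition n m) (φ : ZMod m → Plane)
    (hφ : IsLemma31Assignment A p r S φ) :
    ∃ s ∈ S, ∃ j : ZMod m, φ j = s ∧ s ∈ A.block p j ∧
      ∀ j' : ZMod m, φ j' = s → j' = j :=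
  exists_center_with_single_sublist_general p hccw r S A φ hφ
end
end

section
/- Let P be a finite set of points in the plane in convex position, and let E be a nonempty finite family of segments (diagonals) whose endpoints are distinct points of P, such that no two segments of E cross (any two distinct segments of E intersect in at most a common endpoint). Then there exists a segment d ∈ E with endpoints x, y and a closed half-plane H bounded by the line through x and y such that every segment of E other than d is contained in H (i.e., one of the two subpolygons of the convex hull of P determined by d contains no other diagonal of E). -/
/-!
Orient every diagonal of `E` both ways and count the points of `P` strictly to the left of it;
let `d` be an oriented diagonal with the smallest count. Suppose an endpoint `p` of another
diagonal `e` lies strictly left of `d`. The convex hull of `P` meets the line of `d` only in `d`,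
so `e`, which does not cross `d`, lies weakly left of `d`. Orient `e` so that an endpoint `r` of
`d` off `e` lies strictly to its right. If a point `z` of `P` strictly left of `e` were weakly
right of `d`, the segment `z r` would meet `e` in a point on the line of `d`, hence in a common
point of `d` and `e`, i.e. an endpoint of `d`: a point of `P` strictly between `z` and `r`.
So the points strictly left of `e` form a proper subset (missing `p`) of those strictly left
of `d`, against the choice of `d`.
-/

noncomputable section

open Module Finset

section Convex

variable {𝕜 E : Type*} [Field 𝕜] [LinearOrder 𝕜] [IsStrictOrderedRing 𝕜] [AddCommGroup E]
  [Module 𝕜 E]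

theorem mem_extremePoints_convexHull_of_notMem_convexHull_sdiff {s : Set E} {x : E}
    (hxs : x ∈ s) (hx : x ∉ convexHull 𝕜 (s \ {x})) :
    x ∈ (convexHull 𝕜 s).extremePoints 𝕜 := by
  rcases (s \ {x}).eq_empty_or_nonempty with hempty | hne
  · obtain rfl : s = {x} :=
      (Set.sdiff_eq_empty.1 hempty).antisymm (Set.singleton_subset_iff.2 hxs)
    simp
  have hhull : convexHull 𝕜 s = convexJoin 𝕜 {x} (convexHull 𝕜 (s \ {x})) := by
    rw [← convexHull_insert hne, Set.insert_sdiff_singleton, Set.insert_eq_of_mem hxs]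
  refine mem_extremePoints_iff_left.2 ⟨subset_convexHull 𝕜 s hxs, fun y hy z hz hxyz => ?_⟩
  rw [hhull, convexJoin_singleton_left, Set.mem_iUnion₂] at hy hz
  obtain ⟨y', hy', a, b, ha, hb, hab, rfl⟩ := hy
  obtain ⟨z', hz', c, d, hc, hd, hcd, rfl⟩ := hz
  obtain ⟨α, β, hα, hβ, hαβ, hxyz⟩ := hxyz
  rcases (mul_nonneg hα.le hb).eq_or_lt with hαb | hαb
  · obtain rfl : b = 0 := by nlinarith
    simp [show a = 1 by linarith]
  -- otherwise `x` is a convex combination of `y'` and `z'`, hence lies in `convexHull 𝕜 (s \ {x})`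
  set m := α * b + β * d
  have hm : 0 < m := by positivity
  have hkey : m • x = (α * b) • y' + (β * d) • z' := by
    have : α * a + β * c = 1 - m := by linear_combination α * hab + β * hcd + hαβ
    linear_combination (norm := module) this • x - hxyz
  refine absurd ?_ hx
  convert (convex_convexHull 𝕜 (s \ {x})) hy' hz' (div_nonneg hαb.le hm.le)
    (div_nonneg (mul_nonneg hβ.le hd) hm.le) (by rw [← add_div, div_self hm.ne']) using 1
  calc x = m⁻¹ • (m • x) := (inv_smul_smul₀ hm.ne' x).symm
    _ = _ := by rw [hkey, smul_add, smul_smul, smul_smul, inv_mul_eq_div, inv_mul_eq_div]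

theorem mem_segment_of_mem_affineSpan_pair {A : Set E} {a b x : E}
    (ha : a ∈ A.extremePoints 𝕜) (hb : b ∈ A.extremePoints 𝕜) (hab : a ≠ b) (hx : x ∈ A)
    (hline : x ∈ line[𝕜, a, b]) : x ∈ segment 𝕜 a b := by
  rcases (collinear_insert_of_mem_affineSpan_pair hline).wbtw_or_wbtw_or_wbtw with h | h | h
  · rcases (mem_extremePoints_iff_forall_segment.1 ha).2 x hx b hb.1 h.mem_segment with rfl | rfl
    · exact left_mem_segment 𝕜 x b
    · exact absurd rfl hab
  · rcases (mem_extremePoints_iff_forall_segment.1 hb).2 a ha.1 x hx h.mem_segment with rfl | rfl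
    · exact absurd rfl hab
    · exact right_mem_segment 𝕜 a x
  · exact segment_symm 𝕜 b a ▸ h.mem_segment

theorem exists_mem_segment_apply_eq (f : E →ₗ[𝕜] 𝕜) {x y : E} {c : 𝕜} (hx : f x ≤ c)
    (hy : c ≤ f y) : ∃ z ∈ segment 𝕜 x y, f z = c := by
  have hc : c ∈ segment 𝕜 (f.toAffineMap x) (f.toAffineMap y) := by
    rw [LinearMap.coe_toAffineMap, segment_eq_Icc (hx.trans hy)]
    exact ⟨hx, hy⟩
  rwa [← image_segment] at hc

end Convex

theorem mem_affineSpan_pair_of_apply_eq {K V : Type*} [Field K] [AddCommGroup V] [Module K V]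
    (hV : finrank K V = 2) {u : V →ₗ[K] K} (hu : u ≠ 0) {a b x : V} (hab : a ≠ b)
    (huab : u a = u b) (hux : u x = u a) : x ∈ line[K, a, b] := by
  have := Module.finite_of_finrank_eq_succ hV
  have hker : finrank K (LinearMap.ker u) = 1 := by
    have := Module.Dual.finrank_ker_add_one_of_ne_zero hu
    omega
  have hv : (⟨b - a, by simp [huab]⟩ : LinearMap.ker u) ≠ 0 := by
    simpa [sub_eq_zero] using hab.symm
  obtain ⟨c, hc⟩ := (finrank_eq_one_iff_of_nonzero' _ hv).1 hker ⟨x - a, by simp [hux]⟩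
  refine mem_affineSpan_pair_iff_exists_lineMap_eq.2 ⟨c, ?_⟩
  rw [AffineMap.lineMap_apply, vsub_eq_sub, vadd_eq_add, ← eq_sub_iff_add_eq]
  exact congrArg Subtype.val hc

section Segments

variable {V : Type*} [AddCommGroup V] [Module ℝ V]

def MeetAtEndpoints (d e : V × V) : Prop :=
  segment ℝ d.1 d.2 ∩ segment ℝ e.1 e.2 ⊆ {d.1, d.2} ∩ {e.1, e.2}

theorem meetAtEndpoints_swap_left {d e : V × V} :
    MeetAtEndpoints d.swap e ↔ MeetAtEndpoints d e := by
  simp only [MeetAtEndpoints, Prod.fst_swap, Prod.snd_swap, segment_symm ℝ d.2, Set.pair_comm d.2]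

theorem meetAtEndpoints_swap_right {d e : V × V} :
    MeetAtEndpoints d e.swap ↔ MeetAtEndpoints d e := by
  simp only [MeetAtEndpoints, Prod.fst_swap, Prod.snd_swap, segment_symm ℝ e.2, Set.pair_comm e.2]

theorem Set.Pairwise.meetAtEndpoints_of_swap {E : Set (V × V)}
    (hE : E.Pairwise MeetAtEndpoints) {d e : V × V} (hd : d ∈ E ∨ d.swap ∈ E)
    (he : e ∈ E ∨ e.swap ∈ E) (h₁ : e.1 ≠ d.1) (h₂ : e.1 ≠ d.2) : MeetAtEndpoints d e := by
  rcases hd with hd | hd <;> rcases he with he | he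
  · exact hE hd he (by rintro rfl; exact h₁ rfl)
  · exact meetAtEndpoints_swap_right.1 (hE hd he (by rintro rfl; exact h₂ rfl))
  · exact meetAtEndpoints_swap_left.1 (hE hd he (by rintro rfl; exact h₂ rfl))
  · exact meetAtEndpoints_swap_left.1 <| meetAtEndpoints_swap_right.1 <|
      hE hd he fun h => h₁ (congrArg Prod.snd h).symm

end Segments

def IsDiagonal (P : Finset Plane) (d : Plane × Plane) : Prop :=
  d.1 ∈ P ∧ d.2 ∈ P ∧ d.1 ≠ d.2

theorem IsDiagonal.swap {P : Finset Plane} {d : Plane × Plane} (hd : IsDiagonal P d) :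
    IsDiagonal P d.swap :=
  ⟨hd.2.1, hd.1, hd.2.2.symm⟩

-- the cross product with `d.2 - d.1`: constant on the line of `d`, larger to its left
def sideFunctional (d : Plane × Plane) : Plane →ₗ[ℝ] ℝ where
  toFun z := (d.2 0 - d.1 0) * z 1 - (d.2 1 - d.1 1) * z 0
  map_add' _ _ := by simp only [PiLp.add_apply]; ring
  map_smul' _ _ := by simp only [PiLp.smul_apply, smul_eq_mul, RingHom.id_apply]; ring

theorem sideFunctional_apply (d : Plane × Plane) (z : Plane) :
    sideFunctional d z = (d.2 0 - d.1 0) * z 1 - (d.2 1 - d.1 1) * z 0 := rfl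

theorem sideFunctional_apply_fst (d : Plane × Plane) :
    sideFunctional d d.1 = sideFunctional d d.2 := by
  simp only [sideFunctional_apply]; ring

theorem sideFunctional_swap (d : Plane × Plane) : sideFunctional d.swap = -sideFunctional d := by
  ext z; simp only [sideFunctional_apply, Prod.fst_swap, Prod.snd_swap, LinearMap.neg_apply]; ring

theorem sideFunctional_ne_zero {d : Plane × Plane} (hd : d.1 ≠ d.2) : sideFunctional d ≠ 0 := by
  contrapose! hd
  have h0 : d.2 0 = d.1 0 := by
    simpa [sideFunctional_apply, sub_eq_zero] using
      LinearMap.congr_fun hd (EuclideanSpace.single 1 1)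
  have h1 : d.1 1 = d.2 1 := by
    simpa [sideFunctional_apply, sub_eq_zero] using
      LinearMap.congr_fun hd (EuclideanSpace.single 0 1)
  ext i
  fin_cases i
  exacts [h0.symm, h1]

def leftOf (P : Finset Plane) (d : Plane × Plane) : Finset Plane :=
  {z ∈ P | sideFunctional d d.1 < sideFunctional d z}

namespace ConvexPos

variable {P : Finset Plane} (hP : ConvexPos P) {d e : Plane × Plane} {u w : Plane →ₗ[ℝ] ℝ}
include hP

theorem mem_extremePoints {q : Plane} (hq : q ∈ P) :
    q ∈ (convexHull ℝ (P : Set Plane)).extremePoints ℝ :=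
  mem_extremePoints_convexHull_of_notMem_convexHull_sdiff hq (hP q hq)

theorem eq_or_eq_of_mem_segment {a b q : Plane} (ha : a ∈ P) (hb : b ∈ P) (hq : q ∈ P)
    (hqab : q ∈ segment ℝ a b) : a = q ∨ b = q :=
  (mem_extremePoints_iff_forall_segment.1 (hP.mem_extremePoints hq)).2 _
    (subset_convexHull ℝ _ ha) _ (subset_convexHull ℝ _ hb) hqab

theorem mem_segment_of_apply_eq (hd : IsDiagonal P d) (hu : u ≠ 0) (hud : u d.1 = u d.2)
    {x : Plane} (hx : x ∈ convexHull ℝ (P : Set Plane)) (hux : u x = u d.1) :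
    x ∈ segment ℝ d.1 d.2 :=
  mem_segment_of_mem_affineSpan_pair (hP.mem_extremePoints hd.1) (hP.mem_extremePoints hd.2.1)
    hd.2.2 hx (mem_affineSpan_pair_of_apply_eq finrank_euclideanSpace_fin hu hd.2.2 hud hux)

theorem apply_fst_le_apply_snd (hd : IsDiagonal P d) (he : IsDiagonal P e)
    (hmeet : MeetAtEndpoints d e) (hud : u d.1 = u d.2) (h₁ : u d.1 < u e.1) :
    u d.1 ≤ u e.2 := by
  by_contra! h₂
  obtain ⟨x, hx, hux⟩ := exists_mem_segment_apply_eq u h₂.le h₁.le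
  rw [segment_symm] at hx
  have hxd := hP.mem_segment_of_apply_eq hd (by rintro rfl; simp at h₁) hud
    (segment_subset_convexHull he.1 he.2.1 hx) hux
  rcases (hmeet ⟨hxd, hx⟩).2 with rfl | rfl <;> linarith

theorem filter_lt_ssubset (hd : IsDiagonal P d) (he : IsDiagonal P e)
    (hmeet : MeetAtEndpoints d e) (hud : u d.1 = u d.2) (h₁ : u d.1 < u e.1)
    (h₂ : u d.1 ≤ u e.2) {r : Plane} (hr : r ∈ P) (hur : u r = u d.1)
    (hwe : w e.1 = w e.2) (hwr : w r < w e.1) :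
    {z ∈ P | w e.1 < w z} ⊂ {z ∈ P | u d.1 < u z} := by
  refine (ssubset_iff_of_subset fun z hz => ?_).2 ⟨e.1, by simp [he.1, h₁], by simp⟩
  rw [mem_filter] at hz ⊢
  refine ⟨hz.1, lt_of_not_ge fun hzu => ?_⟩
  obtain ⟨x, hx, hwx⟩ := exists_mem_segment_apply_eq w hwr.le hz.2.le
  have hxP := segment_subset_convexHull hr hz.1 hx
  have hxe := hP.mem_segment_of_apply_eq he (by rintro rfl; simp at hwr) hwe hxP hwx
  -- `x` lies on `e` and between `r` and `z`, so it lies on the line of `d`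
  have hux : u x = u d.1 := le_antisymm
    ((convex_halfSpace_le u.isLinear _).segment_subset hur.le hzu hx)
    ((convex_halfSpace_ge u.isLinear _).segment_subset h₁.le h₂ hxe)
  have hxd := hP.mem_segment_of_apply_eq hd (by rintro rfl; simp at h₁) hud hxP hux
  have hxP' : x ∈ P := by rcases (hmeet ⟨hxd, hxe⟩).1 with rfl | rfl; exacts [hd.1, hd.2.1]
  rcases hP.eq_or_eq_of_mem_segment hr hz.1 hxP' hx with rfl | rfl
  · exact hwr.ne hwx
  · exact hz.2.ne' hwx

theorem card_leftOf_lt_or_card_leftOf_swap_lt (hd : IsDiagonal P d) (he : IsDiagonal P e)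
    (hmeet : MeetAtEndpoints d e) (h₁ : sideFunctional d d.1 < sideFunctional d e.1) :
    #(leftOf P e) < #(leftOf P d) ∨ #(leftOf P e.swap) < #(leftOf P d) := by
  set u := sideFunctional d
  have hud : u d.1 = u d.2 := sideFunctional_apply_fst d
  have h₂ := hP.apply_fst_le_apply_snd hd he hmeet hud h₁
  obtain ⟨r, hr, hur, hre⟩ : ∃ r ∈ P, u r = u d.1 ∧ r ≠ e.2 := by
    by_cases h : d.1 = e.2
    · exact ⟨d.2, hd.2.1, hud.symm, fun h' => hd.2.2 (h.trans h'.symm)⟩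
    · exact ⟨d.1, hd.1, rfl, h⟩
  have hwr : sideFunctional e r ≠ sideFunctional e e.1 := by
    intro h
    have hre' : r ≠ e.1 := by rintro rfl; exact h₁.ne' hur
    rcases hP.eq_or_eq_of_mem_segment he.1 he.2.1 hr
      (hP.mem_segment_of_apply_eq he (sideFunctional_ne_zero he.2.2)
        (sideFunctional_apply_fst e) (subset_convexHull ℝ _ hr) h) with h' | h'
    exacts [hre' h'.symm, hre h'.symm]
  rcases hwr.lt_or_gt with hlt | hgt
  · exact .inl <| card_lt_card <|
      hP.filter_lt_ssubset hd he hmeet hud h₁ h₂ hr hur (sideFunctional_apply_fst e) hlt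
  · have hlt : sideFunctional e.swap r < sideFunctional e.swap e.1 := by
      simpa [sideFunctional_swap] using hgt
    refine .inr <| card_lt_card ?_
    rw [leftOf, sideFunctional_apply_fst e.swap]
    exact hP.filter_lt_ssubset hd he hmeet hud h₁ h₂ hr hur
      (sideFunctional_apply_fst e.swap).symm hlt

theorem sideFunctional_le_of_minimal {E : Set (Plane × Plane)}
    (hdiag : ∀ f ∈ E, IsDiagonal P f) (hpair : E.Pairwise MeetAtEndpoints)
    (hd : d ∈ E ∨ d.swap ∈ E)
    (hmin : ∀ f, f ∈ E ∨ f.swap ∈ E → #(leftOf P d) ≤ #(leftOf P f))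
    (he : e ∈ E ∨ e.swap ∈ E) : sideFunctional d e.1 ≤ sideFunctional d d.1 := by
  have hdiag' : ∀ f, f ∈ E ∨ f.swap ∈ E → IsDiagonal P f := fun f hf =>
    hf.elim (hdiag f) fun h => (hdiag _ h).swap
  have hud := sideFunctional_apply_fst d
  by_contra! h
  have hmeet := hpair.meetAtEndpoints_of_swap hd he (fun h' => h.ne' (congrArg _ h'))
    (fun h' => h.ne (hud.trans (congrArg _ h').symm))
  rcases hP.card_leftOf_lt_or_card_leftOf_swap_lt (hdiag' d hd) (hdiag' e he) hmeet h
    with hlt | hlt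
  · exact (hmin e he).not_gt hlt
  · exact (hmin e.swap he.symm).not_gt hlt

end ConvexPos

/-- Ear lemma for noncrossing diagonals: if `E` is a nonempty finite family of segments
(given by ordered pairs of distinct endpoints in a convex-position set `P`) such that any
two distinct members of `E` intersect in at most a common endpoint, then some `d ∈ E`
has a closed half-plane `H = {x | u x ≤ u d.1}` bounded by the line through its endpoints
(`u` a nonzero linear functional with `u d.1 = u d.2`) containing every other segment
of `E`. -/
theorem exists_ear_diagonal
    (P : Finset Plane) (hP : ConvexPos P)
    (E : Finset (Plane × Plane)) (hE : E.Nonempty)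
    (hend : ∀ e ∈ E, e.1 ∈ P ∧ e.2 ∈ P ∧ e.1 ≠ e.2)
    (hcross : ∀ e ∈ E, ∀ e' ∈ E, e ≠ e' →
      ∀ x ∈ segment ℝ e.1 e.2 ∩ segment ℝ e'.1 e'.2,
        (x = e.1 ∨ x = e.2) ∧ (x = e'.1 ∨ x = e'.2)) :
    ∃ d ∈ E, ∃ u : Plane →ₗ[ℝ] ℝ, u ≠ 0 ∧ u d.1 = u d.2 ∧
      ∀ e ∈ E, e ≠ d → ∀ x ∈ segment ℝ e.1 e.2, u x ≤ u d.1 := by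
  classical
  obtain ⟨d, hd, hmin⟩ := (E ∪ E.map (Equiv.prodComm _ _).toEmbedding).exists_min_image
    (fun f => #(leftOf P f)) (hE.mono subset_union_left)
  simp only [mem_union, mem_map_equiv, Equiv.prodComm_symm, Equiv.prodComm_apply] at hd hmin
  have hpair : (E : Set (Plane × Plane)).Pairwise MeetAtEndpoints :=
    fun e he e' he' hne x hx => hcross e he e' he' hne x hx
  set u := sideFunctional d
  have hleft : ∀ e ∈ E, ∀ x ∈ segment ℝ e.1 e.2, u x ≤ u d.1 := fun e he =>
    (convex_halfSpace_le u.isLinear _).segment_subset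
      (hP.sideFunctional_le_of_minimal hend hpair hd hmin (.inl he))
      (hP.sideFunctional_le_of_minimal (e := e.swap) hend hpair hd hmin (.inr he))
  have hud : u d.1 = u d.2 := sideFunctional_apply_fst d
  have hu : u ≠ 0 := sideFunctional_ne_zero <| hd.elim (hend d · |>.2.2) (hend _ · |>.2.2.symm)
  rcases hd with hd | hd
  · exact ⟨d, hd, u, hu, hud, fun e he _ => hleft e he⟩
  · exact ⟨d.swap, hd, u, hu, hud.symm, fun e he _ x hx => (hleft e he x hx).trans_eq hud⟩
end
end
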